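/- arXiv:1701.01207 — 7 statements merged into one kernel-verified Lean document; each statement's English description precedes it below -/
import Mathlib

section
/- For all real x and all α ≥ 0, exp(x) ≥ 1 + x + c_α(x), where c_α(x) = (1/2)exp(-α)x² if |x| ≤ α and c_α(x) = (1/2)exp(-α)α|x| if |x| ≥ α. -/
/-! Writing `φ x = exp x - 1 - x`, Taylor's theorem with Lagrange remainder gives
`φ x ≥ exp (-|x|) * x ^ 2 / 2`, which is the quadratic bound for `|x| ≤ α`. In the tails,
convexity of `φ` with `φ 0 = 0` makes `φ x / |x|` grow along each ray, so for `|x| ≥ α` it is at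
least its value at the point of modulus `α` on the same ray, namely `exp (-α) * α / 2`. -/

open Real

/-- The function `c_α` : quadratic near the origin, linear in the tails. -/
noncomputable def cFun (α x : ℝ) : ℝ :=
  if |x| ≤ α then (1/2) * Real.exp (-α) * x ^ 2 else (1/2) * Real.exp (-α) * α * |x|

namespace Real

theorem sq_div_two_mul_exp_le_exp_sub_one_sub {x : ℝ} (hx : x ≤ 0) :
    x ^ 2 / 2 * exp x ≤ exp x - 1 - x := by
  -- `g x = e^{-x} (φ x - x ^ 2 / 2 * e^x)`, and `g' t = t (e^{-t} - 1) ≤ 0` for `t ≤ 0`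
  let g : ℝ → ℝ := fun t => 1 - (1 + t) * exp (-t) - t ^ 2 / 2
  have hg : ∀ t, HasDerivAt g (t * (exp (-t) - 1)) t := fun t => by
    have := ((((hasDerivAt_id' t).const_add 1).fun_mul (hasDerivAt_neg t).exp).const_sub 1).fun_sub
      ((hasDerivAt_pow 2 t).div_const 2)
    refine this.congr_deriv ?_
    push_cast
    ring
  have hanti : AntitoneOn g (Set.Iic 0) := by
    refine antitoneOn_of_hasDerivWithinAt_nonpos (convex_Iic 0)
      (fun t _ => (hg t).continuousAt.continuousWithinAt) (fun t _ => (hg t).hasDerivWithinAt) ?_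
    intro t ht
    rw [interior_Iic, Set.mem_Iio] at ht
    exact mul_nonpos_of_nonpos_of_nonneg ht.le (by simp [ht.le])
  have hgx : 0 ≤ g x := by simpa [g] using hanti hx Set.self_mem_Iic hx
  have hexp : exp x * exp (-x) = 1 := by rw [← exp_add, add_neg_cancel, exp_zero]
  have hexp_g : exp x * g x = exp x - 1 - x - x ^ 2 / 2 * exp x := by
    simp only [g]
    linear_combination (-1 - x) * hexp
  nlinarith [mul_nonneg (exp_pos x).le hgx]

theorem exp_neg_abs_mul_sq_div_two_le (x : ℝ) : exp (-|x|) * x ^ 2 / 2 ≤ exp x - 1 - x := by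
  rcases le_total 0 x with hx | hx
  · have : exp (-|x|) ≤ 1 := exp_le_one_iff.2 (neg_nonpos.2 (abs_nonneg x))
    nlinarith [quadratic_le_exp_of_nonneg hx, sq_nonneg x]
  · rw [abs_of_nonpos hx, neg_neg]
    linarith [sq_div_two_mul_exp_le_exp_sub_one_sub hx]

theorem exp_mul_sub_one_sub_mul_le {t : ℝ} (ht₀ : 0 ≤ t) (ht₁ : t ≤ 1) (x : ℝ) :
    exp (t * x) - 1 - t * x ≤ t * (exp x - 1 - x) := by
  have := convexOn_exp.2 (Set.mem_univ x) (Set.mem_univ 0) ht₀ (sub_nonneg.2 ht₁) (by ring)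
  simp only [smul_eq_mul, mul_zero, add_zero, exp_zero, mul_one] at this
  linarith

theorem exp_neg_mul_mul_abs_div_two_le {α x : ℝ} (hαx : α ≤ |x|) :
    exp (-α) * α * |x| / 2 ≤ exp x - 1 - x := by
  rcases le_or_gt α 0 with hα | hα
  · have : exp (-α) * α * |x| ≤ 0 :=
      mul_nonpos_of_nonpos_of_nonneg (mul_nonpos_of_nonneg_of_nonpos (exp_pos _).le hα)
        (abs_nonneg x)
    linarith [add_one_le_exp x]
  have hx : 0 < |x| := hα.trans_le hαx
  set t := α / |x|
  have hty : |t * x| = α := by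
    rw [abs_mul, abs_of_nonneg (by positivity), div_mul_cancel₀ _ hx.ne']
  have key : exp (-α) * α ^ 2 / 2 ≤ t * (exp x - 1 - x) :=
    calc exp (-α) * α ^ 2 / 2 = exp (-|t * x|) * (t * x) ^ 2 / 2 := by rw [← sq_abs (t * x), hty]
      _ ≤ exp (t * x) - 1 - t * x := exp_neg_abs_mul_sq_div_two_le _
      _ ≤ t * (exp x - 1 - x) :=
          exp_mul_sub_one_sub_mul_le (by positivity) ((div_le_one hx).2 hαx) x
  rw [div_mul_eq_mul_div, le_div_iff₀ hx] at key
  refine le_of_mul_le_mul_left ?_ hα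
  linarith

end Real

theorem exp_ge_one_add_add_cFun_general (α : ℝ) (x : ℝ) :
    Real.exp x ≥ 1 + x + cFun α x := by
  suffices cFun α x ≤ exp x - 1 - x by linarith
  unfold cFun
  split_ifs with h
  · calc 1 / 2 * exp (-α) * x ^ 2 ≤ exp (-|x|) * x ^ 2 / 2 := by
          nlinarith [exp_le_exp.2 (neg_le_neg h), sq_nonneg x]
      _ ≤ exp x - 1 - x := exp_neg_abs_mul_sq_div_two_le x
  · linarith [exp_neg_mul_mul_abs_div_two_le (not_le.1 h).le]

/-- For all real `x` and all `α ≥ 0`, `exp x ≥ 1 + x + c_α(x)`. -/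
theorem exp_ge_one_add_add_cFun (α : ℝ) (hα : 0 ≤ α) (x : ℝ) :
    Real.exp x ≥ 1 + x + cFun α x :=
  exp_ge_one_add_add_cFun_general α x
end

section
/- If a linear map L : ℝ^{q×q} → ℝ^d satisfies δ₁(L) < 1 (restricted isometry on rank-one matrices), then for every X ∈ ℝ^{q×q} with ‖X‖_F ≤ 1, the spectral norm of L'L(X) satisfies ‖L'L(X)‖₂ ≤ √(2(1+δ₁(L)))·‖L‖₂, where ‖L‖₂ is the operator norm of L from Frobenius norm to Euclidean norm. -/
/-!
Testing `L'L(X)` against the unit rank-one matrix `u vᵀ` gives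
`uᵀ L'L(X) v = ⟨L X, L (u vᵀ)⟩`. Cauchy–Schwarz bounds this by `‖L X‖ ‖L (u vᵀ)‖`, where
`‖L X‖ ≤ C` and, by the restricted isometry property on rank one, `‖L (u vᵀ)‖ ≤ √(1 + δ)`.
-/

open Matrix

namespace Matrix

variable {m n R : Type*} [Fintype m] [Fintype n] [CommSemiring R]

theorem trace_transpose_mul_vecMulVec (A : Matrix m n R) (u : m → R) (v : n → R) :
    trace (Aᵀ * vecMulVec u v) = u ⬝ᵥ (A *ᵥ v) := by
  rw [mul_vecMulVec, trace_vecMulVec, mulVec_transpose, dotProduct_mulVec]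

theorem trace_transpose_vecMulVec_mul_self (u : m → R) (v : n → R) :
    trace ((vecMulVec u v)ᵀ * vecMulVec u v) = (u ⬝ᵥ u) * (v ⬝ᵥ v) := by
  rw [trace_transpose_mul_vecMulVec, vecMulVec_mulVec, op_smul_eq_smul, dotProduct_smul,
    smul_eq_mul, mul_comm]

end Matrix

theorem spectral_norm_adjoint_comp_le_general (q d : ℕ) (δ C : ℝ)
    (hδ0 : 0 ≤ δ) (hC : 0 ≤ C)
    (L : Matrix (Fin q) (Fin q) ℝ →ₗ[ℝ] (Fin d → ℝ))
    (Ladj : (Fin d → ℝ) →ₗ[ℝ] Matrix (Fin q) (Fin q) ℝ)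
    (hadj : ∀ (y : Fin d → ℝ) (Z : Matrix (Fin q) (Fin q) ℝ),
      Matrix.trace ((Ladj y)ᵀ * Z) = ∑ i, y i * L Z i)
    (hRIP : ∀ X : Matrix (Fin q) (Fin q) ℝ, X.rank ≤ 1 →
      (1 - δ) * Matrix.trace (Xᵀ * X) ≤ ∑ i, (L X i) ^ 2 ∧
        ∑ i, (L X i) ^ 2 ≤ (1 + δ) * Matrix.trace (Xᵀ * X))
    (hCnorm : ∀ X : Matrix (Fin q) (Fin q) ℝ, ∑ i, (L X i) ^ 2 ≤ C ^ 2 * Matrix.trace (Xᵀ * X)) :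
    ∀ X : Matrix (Fin q) (Fin q) ℝ, Matrix.trace (Xᵀ * X) ≤ 1 →
      ∀ u v : Fin q → ℝ, (∑ a, (u a) ^ 2 = 1) → (∑ b, (v b) ^ 2 = 1) →
        u ⬝ᵥ ((Ladj (L X)) *ᵥ v) ≤ Real.sqrt (2 * (1 + δ)) * C := by
  intro X hX u v hu hv
  set Z := vecMulVec u v
  have hZ : trace (Zᵀ * Z) = 1 := by
    rw [trace_transpose_vecMulVec_mul_self]
    simp only [dotProduct, ← sq]
    rw [hu, hv, mul_one]
  have hLX : √(∑ i, L X i ^ 2) ≤ C := by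
    refine (Real.sqrt_le_sqrt ((hCnorm X).trans ?_)).trans_eq (Real.sqrt_sq hC)
    exact mul_le_of_le_one_right (sq_nonneg C) hX
  have hLZ : √(∑ i, L Z i ^ 2) ≤ √(2 * (1 + δ)) := by
    refine Real.sqrt_le_sqrt ((hRIP Z (rank_vecMulVec_le u v)).2.trans ?_)
    rw [hZ]
    linarith
  calc u ⬝ᵥ (Ladj (L X) *ᵥ v) = ∑ i, L X i * L Z i := by
        rw [← trace_transpose_mul_vecMulVec, hadj]
    _ ≤ √(∑ i, L X i ^ 2) * √(∑ i, L Z i ^ 2) := Real.sum_mul_le_sqrt_mul_sqrt _ _ _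
    _ ≤ C * √(2 * (1 + δ)) := mul_le_mul hLX hLZ (Real.sqrt_nonneg _) hC
    _ = √(2 * (1 + δ)) * C := mul_comm _ _

/-- If `L : ℝ^{q×q} → ℝ^d` satisfies the restricted isometry condition on rank-one matrices with
constant `δ₁ < 1`, then for every `X` with `‖X‖_F ≤ 1`, the spectral norm of `L'L(X)` is at most
`√(2(1+δ₁)) ‖L‖₂`, where `L'` is the adjoint of `L` (with respect to the trace inner product on
matrices and the Euclidean inner product on `ℝ^d`) and `‖L‖₂` is the operator norm of `L` from
the Frobenius norm to the Euclidean norm (represented by any upper bound `C`). -/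
theorem spectral_norm_adjoint_comp_le (q d : ℕ) (δ C : ℝ)
    (hδ0 : 0 ≤ δ) (hδ1 : δ < 1) (hC : 0 ≤ C)
    (L : Matrix (Fin q) (Fin q) ℝ →ₗ[ℝ] (Fin d → ℝ))
    (Ladj : (Fin d → ℝ) →ₗ[ℝ] Matrix (Fin q) (Fin q) ℝ)
    (hadj : ∀ (y : Fin d → ℝ) (Z : Matrix (Fin q) (Fin q) ℝ),
      Matrix.trace ((Ladj y)ᵀ * Z) = ∑ i, y i * L Z i)
    (hRIP : ∀ X : Matrix (Fin q) (Fin q) ℝ, X.rank ≤ 1 →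
      (1 - δ) * Matrix.trace (Xᵀ * X) ≤ ∑ i, (L X i) ^ 2 ∧
        ∑ i, (L X i) ^ 2 ≤ (1 + δ) * Matrix.trace (Xᵀ * X))
    (hCnorm : ∀ X : Matrix (Fin q) (Fin q) ℝ, ∑ i, (L X i) ^ 2 ≤ C ^ 2 * Matrix.trace (Xᵀ * X)) :
    ∀ X : Matrix (Fin q) (Fin q) ℝ, Matrix.trace (Xᵀ * X) ≤ 1 →
      ∀ u v : Fin q → ℝ, (∑ a, (u a) ^ 2 = 1) → (∑ b, (v b) ^ 2 = 1) →
        u ⬝ᵥ ((Ladj (L X)) *ᵥ v) ≤ Real.sqrt (2 * (1 + δ)) * C :=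
  spectral_norm_adjoint_comp_le_general q d δ C hδ0 hC L Ladj hadj hRIP hCnorm
end

section
/- Let W = span{I ⊗ W₁ + W₂ ⊗ I : W₁, W₂ ∈ ℝ^{q×q}} ⊆ L(ℝ^{q×q}) (Kronecker products acting on q×q matrices). Then for any linear operator E on ℝ^{q×q}, there exist matrices E_L, E_R ∈ ℝ^{q×q} such that the orthogonal projection of E onto W equals I ⊗ E_L + E_R ⊗ I, with ‖E_L‖_F ≤ ‖E‖/√q and ‖E_R‖_F ≤ ‖E‖/√q, where ‖E‖ is the Euclidean (Hilbert–Schmidt) norm of E. -/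
/-!
Replacing `(A, B)` by `(A + c • 1, B - c • 1)` does not change the operator `X ↦ A X + X Bᵀ`, so
`P` can be written with `trace E_L = trace E_R`. Summing over the matrix units gives
`‖X ↦ A X + X Bᵀ‖² = q ‖A‖²_F + q ‖B‖²_F + 2 trace A trace B`, whose last term is then a square,
hence `q ‖E_L‖²_F, q ‖E_R‖²_F ≤ ‖P‖²`; and `‖P‖ ≤ ‖E‖` by Pythagoras, as `E - P ⊥ P`.
-/

open Matrix Finset

/-- The Hilbert–Schmidt inner product of two operators on `ℝ^{q×q}`, computed in the
orthonormal basis of standard basis matrices (with the trace inner product on matrices). -/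
noncomputable def hsInner (q : ℕ)
    (F G : Matrix (Fin q) (Fin q) ℝ → Matrix (Fin q) (Fin q) ℝ) : ℝ :=
  ∑ a : Fin q, ∑ b : Fin q,
    Matrix.trace ((F (Matrix.single a b 1))ᵀ * G (Matrix.single a b 1))

namespace Matrix

variable {n R : Type*} [Fintype n]

lemma trace_transpose_mul_eq_sum [CommSemiring R] (M N : Matrix n n R) :
    trace (Mᵀ * N) = ∑ j, ∑ i, M i j * N i j := by
  simp only [trace, diag, mul_apply, transpose_apply]

lemma trace_transpose_mul_self_nonneg [CommRing R] [LinearOrder R] [IsStrictOrderedRing R]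
    (M : Matrix n n R) : 0 ≤ trace (Mᵀ * M) := by
  rw [trace_transpose_mul_eq_sum]
  exact sum_nonneg fun j _ => sum_nonneg fun i _ => mul_self_nonneg _

lemma mul_single_add_single_mul_transpose_apply [DecidableEq n] [CommSemiring R]
    (A B : Matrix n n R) (a b i j : n) :
    (A * single a b 1 + single a b 1 * Bᵀ : Matrix n n R) i j
      = (if j = b then A i a else 0) + (if i = a then B j b else 0) := by
  by_cases hj : j = b <;> by_cases hi : i = a <;> simp [hj, hi]

lemma exists_trace_eq_of_mul_add_mul_transpose {K : Type*} [Field K] [CharZero K]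
    [DecidableEq n] [Nonempty n] (A B : Matrix n n K) :
    ∃ A' B' : Matrix n n K, trace A' = trace B' ∧ ∀ X, A * X + X * Bᵀ = A' * X + X * B'ᵀ := by
  set c := (trace B - trace A) / (2 * Fintype.card n)
  refine ⟨A + c • 1, B - c • 1, ?_, fun X => ?_⟩
  · have : (Fintype.card n : K) ≠ 0 := Nat.cast_ne_zero.mpr Fintype.card_ne_zero
    simp only [trace_add, trace_sub, trace_smul, trace_one, smul_eq_mul, c]
    field_simp
    ring
  · simp only [add_mul, transpose_sub, transpose_smul, transpose_one, mul_sub, Matrix.smul_mul,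
      Matrix.mul_smul, one_mul, mul_one]
    abel

end Matrix

section HilbertSchmidt

variable {q : ℕ}

lemma hsInner_eq_sum (F G : Matrix (Fin q) (Fin q) ℝ → Matrix (Fin q) (Fin q) ℝ) :
    hsInner q F G = ∑ a, ∑ b, ∑ j, ∑ i, F (single a b 1) i j * G (single a b 1) i j := by
  simp only [hsInner, trace_transpose_mul_eq_sum]

lemma hsInner_self_nonneg (F : Matrix (Fin q) (Fin q) ℝ → Matrix (Fin q) (Fin q) ℝ) :
    0 ≤ hsInner q F F := by
  rw [hsInner_eq_sum]
  exact sum_nonneg fun a _ => sum_nonneg fun b _ => sum_nonneg fun j _ =>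
    sum_nonneg fun i _ => mul_self_nonneg _

lemma hsInner_self_le_of_orthogonal (F G : Matrix (Fin q) (Fin q) ℝ → Matrix (Fin q) (Fin q) ℝ)
    (h : hsInner q (fun X => F X - G X) G = 0) : hsInner q G G ≤ hsInner q F F := by
  have pythagoras : hsInner q F F = hsInner q (fun X => F X - G X) (fun X => F X - G X)
      + 2 * hsInner q (fun X => F X - G X) G + hsInner q G G := by
    simp only [hsInner_eq_sum, Matrix.sub_apply, mul_sum, ← sum_add_distrib]
    refine sum_congr rfl fun a _ => sum_congr rfl fun b _ => sum_congr rfl fun j _ =>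
      sum_congr rfl fun i _ => ?_
    ring
  linarith [hsInner_self_nonneg (fun X => F X - G X)]

lemma hsInner_mul_add_mul_transpose_self (A B : Matrix (Fin q) (Fin q) ℝ) :
    hsInner q (fun X => A * X + X * Bᵀ) (fun X => A * X + X * Bᵀ)
      = q * trace (Aᵀ * A) + q * trace (Bᵀ * B) + 2 * (trace A * trace B) := by
  simp only [hsInner, trace_transpose_mul_eq_sum, mul_single_add_single_mul_transpose_apply]
  simp only [mul_add, mul_ite, add_mul, ite_mul, zero_mul, mul_zero, sum_add_distrib, sum_ite_eq',
    mem_univ, if_true, sum_ite_irrel, sum_const_zero, sum_const, card_univ, Fintype.card_fin,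
    nsmul_eq_mul, trace, diag_apply, ← sum_mul, ← mul_sum]
  ring

lemma mul_trace_transpose_mul_self_le_hsInner {A B : Matrix (Fin q) (Fin q) ℝ}
    (h : trace A = trace B) :
    q * trace (Aᵀ * A) ≤ hsInner q (fun X => A * X + X * Bᵀ) (fun X => A * X + X * Bᵀ) ∧
      q * trace (Bᵀ * B) ≤ hsInner q (fun X => A * X + X * Bᵀ) (fun X => A * X + X * Bᵀ) := by
  have hq : (0 : ℝ) ≤ q := q.cast_nonneg
  rw [hsInner_mul_add_mul_transpose_self, h]
  constructor <;>
    nlinarith [mul_self_nonneg (trace B), mul_nonneg hq (trace_transpose_mul_self_nonneg A),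
      mul_nonneg hq (trace_transpose_mul_self_nonneg B)]

end HilbertSchmidt

lemma Real.sqrt_le_sqrt_div_sqrt_of_mul_le {q t h : ℝ} (hq : 0 < q) (hqt : q * t ≤ h) :
    √t ≤ √h / √q := by
  rw [← Real.sqrt_div' _ hq.le]
  exact Real.sqrt_le_sqrt ((le_div_iff₀' hq).mpr hqt)

/-- Let `W = span{I ⊗ W₁ + W₂ ⊗ I}` (Kronecker products acting on `q×q` matrices by
`(A ⊗ B)(X) = B X Aᵀ`, so the elements of `W` act by `X ↦ W₁ X + X W₂ᵀ`).  If `P` is the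
orthogonal projection of a linear operator `E` onto `W`, then there exist `E_L, E_R` with
`P = I ⊗ E_L + E_R ⊗ I` and `‖E_L‖_F, ‖E_R‖_F ≤ ‖E‖/√q` (Hilbert–Schmidt norm of `E`). -/
theorem projection_onto_W_decomposition (q : ℕ) (hq : 0 < q)
    (E P : Matrix (Fin q) (Fin q) ℝ →ₗ[ℝ] Matrix (Fin q) (Fin q) ℝ)
    (hPmem : ∃ W₁ W₂ : Matrix (Fin q) (Fin q) ℝ, ∀ X, P X = W₁ * X + X * W₂ᵀ)
    (hPorth : ∀ W₁ W₂ : Matrix (Fin q) (Fin q) ℝ,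
      hsInner q (fun X => E X - P X) (fun X => W₁ * X + X * W₂ᵀ) = 0) :
    ∃ EL ER : Matrix (Fin q) (Fin q) ℝ,
      (∀ X, P X = EL * X + X * ERᵀ) ∧
      Real.sqrt (Matrix.trace (ELᵀ * EL)) ≤ Real.sqrt (hsInner q (⇑E) (⇑E)) / Real.sqrt q ∧
      Real.sqrt (Matrix.trace (ERᵀ * ER)) ≤ Real.sqrt (hsInner q (⇑E) (⇑E)) / Real.sqrt q := by
  obtain ⟨W₁, W₂, hW⟩ := hPmem
  have : Nonempty (Fin q) := Fin.pos_iff_nonempty.mp hq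
  obtain ⟨EL, ER, htr, hrepr⟩ := exists_trace_eq_of_mul_add_mul_transpose W₁ W₂
  have hP : ⇑P = fun X => EL * X + X * ERᵀ := funext fun X => (hW X).trans (hrepr X)
  have hPE : hsInner q P P ≤ hsInner q E E :=
    hsInner_self_le_of_orthogonal E P (hP ▸ hPorth EL ER)
  obtain ⟨hL, hR⟩ := mul_trace_transpose_mul_self_le_hsInner htr
  rw [← hP] at hL hR
  have hq_pos : (0 : ℝ) < q := Nat.cast_pos.mpr hq
  exact ⟨EL, ER, congrFun hP, Real.sqrt_le_sqrt_div_sqrt_of_mul_le hq_pos (hL.trans hPE),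
    Real.sqrt_le_sqrt_div_sqrt_of_mul_le hq_pos (hR.trans hPE)⟩
end

section
/- Let M ∈ ℝ^{q×q} have entries satisfying |M_{ij} − 1/q| ≤ 1/(2q), and define ε_{ij} = M_{ij} − 1/q and ε = max{max_j|Σ_i ε_{ij}|, max_i|Σ_j ε_{ij}|}, assuming ε ≤ 1/(24√q). If (ε*, η*) ∈ ℝ^q × ℝ^q minimizes F(ε, η) = Σ_{ij} M_{ij} exp(ε_i + η_j) − Σ_i ε_i − Σ_j η_j, then |ε*_i + η*_j| ≤ 48√q·ε for all i, j. -/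
open Finset Real

/-!
Minimality of `(ε*, η*)` gives the Sinkhorn equations: `M_{ij} exp(ε*_i + η*_j)` is doubly
stochastic. As the entries of `M` lie in `[1/(2q), 3/(2q)]`, this forces
`exp(ε*_i + η*_j) ≥ 2/9`, and on that range `exp x - 1 - x ≥ x²/9`.

`F` is unchanged under `(ε, η) ↦ (ε + d, η - d)`; choose `d` so that `b = η* - d` has mean zero
and put `a = ε* + d`. Comparing `F(a, b)` with `F(0, 0)` bounds
`Σ M_{ij} (exp(a_i + b_j) - 1 - (a_i + b_j))` by `ε (‖a‖₁ + ‖b‖₁)`, because the row and column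
sums of `M` are within `ε` of `1`. The quadratic lower bound and `Σ b = 0` make the same sum at
least `(‖a‖₂² + ‖b‖₂²)/18`, and Cauchy–Schwarz turns this into `|a_i + b_j| ≤ 36 √q ε`.
-/

namespace Real

theorem exp_mul_sq_div_two_le_exp_sub_one_sub {x : ℝ} (hx : x ≤ 0) :
    exp x * x ^ 2 / 2 ≤ exp x - 1 - x := by
  let g : ℝ → ℝ := fun y => 1 - (1 + y) * exp (-y) - y ^ 2 / 2
  have hg : ∀ y, HasDerivAt g (y * (exp (-y) - 1)) y := fun y => by
    have h := ((((hasDerivAt_id' y).const_add 1).mul (hasDerivAt_neg y).exp).const_sub 1).sub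
      ((hasDerivAt_pow 2 y).div_const 2)
    exact h.congr_deriv (by push_cast; ring)
  have hanti : AntitoneOn g (Set.Iic 0) := by
    refine antitoneOn_of_deriv_nonpos (convex_Iic 0)
      (fun y _ => (hg y).continuousAt.continuousWithinAt)
      (fun y _ => (hg y).differentiableAt.differentiableWithinAt) fun y hy => ?_
    rw [interior_Iic, Set.mem_Iio] at hy
    rw [(hg y).deriv]
    exact mul_nonpos_of_nonpos_of_nonneg hy.le (by linarith [add_one_le_exp (-y)])
  have hg_nonneg : 0 ≤ exp x * g x := by
    have hg0 : g 0 ≤ g x := hanti hx (Set.mem_Iic.2 le_rfl) hx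
    have : g 0 = 0 := by simp [g]
    exact mul_nonneg (exp_pos x).le (by linarith)
  have hexp : exp x * exp (-x) = 1 := by rw [← exp_add, add_neg_cancel, exp_zero]
  have : exp x * g x = exp x - 1 - x - exp x * x ^ 2 / 2 := by
    simp only [g]
    linear_combination (-1 - x) * hexp
  linarith

theorem min_one_exp_mul_sq_div_two_le (x : ℝ) :
    min 1 (exp x) * x ^ 2 / 2 ≤ exp x - 1 - x := by
  rcases le_total 0 x with hx | hx
  · rw [min_eq_left (one_le_exp hx)]
    linarith [quadratic_le_exp_of_nonneg hx]
  · rw [min_eq_right (exp_le_one_iff.2 hx)]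
    exact exp_mul_sq_div_two_le_exp_sub_one_sub hx

theorem eq_one_of_forall_le_exp_sub_one_mul {R : ℝ} (h : ∀ s, s ≤ (exp s - 1) * R) :
    R = 1 := by
  have hmin : IsLocalMin (fun s => (exp s - 1) * R - s) 0 :=
    Filter.Eventually.of_forall fun s => by simpa using h s
  have hderiv : HasDerivAt (fun s => (exp s - 1) * R - s) (exp 0 * R - 1) 0 :=
    (((hasDerivAt_exp 0).sub_const 1).mul_const R).sub (hasDerivAt_id' 0)
  simpa [sub_eq_zero] using hmin.hasDerivAt_eq_zero hderiv

end Real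

theorem mem_Icc_of_abs_sub_one_div_le {x n : ℝ} (h : |x - 1 / n| ≤ 1 / (2 * n)) :
    x ∈ Set.Icc (1 / (2 * n)) (3 / (2 * n)) := by
  have h1 : 1 / n = 2 * (1 / (2 * n)) := by ring
  have h3 : 3 / (2 * n) = 3 * (1 / (2 * n)) := by ring
  have := abs_le.1 h
  constructor <;> linarith

section Sinkhorn

variable {ι κ : Type*} [Fintype ι] [Fintype κ]

theorem sum_mul_le_mul_sum_abs {a u : ι → ℝ} {c : ℝ} (hu : ∀ i, |u i| ≤ c) :
    ∑ i, a i * u i ≤ c * ∑ i, |a i| := by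
  rw [mul_sum]
  refine sum_le_sum fun i _ => ?_
  calc a i * u i ≤ |a i| * |u i| := (le_abs_self _).trans_eq (abs_mul _ _)
    _ ≤ c * |a i| := by rw [mul_comm c]; gcongr; exact hu i

noncomputable def sinkhornObjective (M : ι → κ → ℝ) (e : ι → ℝ) (h : κ → ℝ) : ℝ :=
  ∑ i, ∑ j, M i j * exp (e i + h j) - ∑ i, e i - ∑ j, h j

theorem sinkhornObjective_zero (M : ι → κ → ℝ) :
    sinkhornObjective M 0 0 = ∑ i, ∑ j, M i j := by
  simp [sinkhornObjective]

theorem sinkhornObjective_swap (M : ι → κ → ℝ) (e : ι → ℝ) (h : κ → ℝ) :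
    sinkhornObjective (Function.swap M) h e = sinkhornObjective M e h := by
  simp only [sinkhornObjective, Function.swap, add_comm (h _)]
  rw [sum_comm]
  ring

theorem sinkhornObjective_add_sub_const (M : ι → ι → ℝ) (e h : ι → ℝ) (d : ℝ) :
    sinkhornObjective M (fun i => e i + d) (fun j => h j - d) = sinkhornObjective M e h := by
  simp only [sinkhornObjective, sum_add_distrib, sum_sub_distrib, add_add_sub_cancel]
  ring

theorem sinkhornObjective_update [DecidableEq ι] (M : ι → κ → ℝ) (e : ι → ℝ) (h : κ → ℝ)
    (i : ι) (s : ℝ) :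
    sinkhornObjective M (Function.update e i (e i + s)) h =
      sinkhornObjective M e h + (exp s - 1) * ∑ j, M i j * exp (e i + h j) - s := by
  have hupdate : ∀ k, Function.update e i (e i + s) k = e k + if k = i then s else 0 := by
    intro k
    rcases eq_or_ne k i with rfl | hk <;> simp [*]
  have hrow : ∀ k, ∑ j, M k j * exp (Function.update e i (e i + s) k + h j) =
      ∑ j, M k j * exp (e k + h j) +
        if k = i then (exp s - 1) * ∑ j, M i j * exp (e i + h j) else 0 := by
    intro k
    rcases eq_or_ne k i with rfl | hk
    · simp only [hupdate, if_true, mul_sum, ← sum_add_distrib, add_right_comm _ s, exp_add]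
      congr 1 with j
      ring
    · simp [hk]
  simp only [sinkhornObjective, hrow]
  simp only [hupdate, sum_add_distrib, sum_ite_eq', mem_univ, if_true]
  ring

theorem row_sum_eq_one_of_minimizer {M : ι → κ → ℝ} {e : ι → ℝ} {h : κ → ℝ}
    (hmin : ∀ e' h', sinkhornObjective M e h ≤ sinkhornObjective M e' h') (i : ι) :
    ∑ j, M i j * exp (e i + h j) = 1 := by
  classical
  refine eq_one_of_forall_le_exp_sub_one_mul fun s => ?_
  have := hmin (Function.update e i (e i + s)) h
  rw [sinkhornObjective_update] at this
  linarith

theorem col_sum_eq_one_of_minimizer {M : ι → κ → ℝ} {e : ι → ℝ} {h : κ → ℝ}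
    (hmin : ∀ e' h', sinkhornObjective M e h ≤ sinkhornObjective M e' h') (j : κ) :
    ∑ i, M i j * exp (e i + h j) = 1 := by
  have hmin' : ∀ h' e', sinkhornObjective (Function.swap M) h e ≤
      sinkhornObjective (Function.swap M) h' e' := fun h' e' => by
    simpa only [sinkhornObjective_swap] using hmin e' h'
  simpa only [Function.swap, add_comm (h j)] using row_sum_eq_one_of_minimizer hmin' j

theorem le_card_mul_sq_mul_exp_of_sum_eq_one {M : ι → κ → ℝ} {e : ι → ℝ} {h : κ → ℝ}
    {lo hi : ℝ} (hlo : 0 ≤ lo) (hM : ∀ i j, lo ≤ M i j ∧ M i j ≤ hi)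
    (hrow : ∀ i, ∑ j, M i j * exp (e i + h j) = 1)
    (hcol : ∀ j, ∑ i, M i j * exp (e i + h j) = 1) (i : ι) (j : κ) :
    lo ≤ Fintype.card ι * hi ^ 2 * exp (e i + h j) := by
  set P := ∑ l, exp (h l)
  set Q := ∑ k, exp (e k)
  have hrow' : ∀ k, exp (e k) * ∑ l, M k l * exp (h l) = 1 := fun k => by
    rw [← hrow k, mul_sum]; congr 1 with l; rw [exp_add]; ring
  have hcol' : ∀ l, exp (h l) * ∑ k, M k l * exp (e k) = 1 := fun l => by
    rw [← hcol l, mul_sum]; congr 1 with k; rw [exp_add]; ring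
  have hrow_lo : ∀ k, lo * P ≤ ∑ l, M k l * exp (h l) := fun k => by
    rw [mul_sum]; gcongr with l; exact (hM k l).1
  have hrow_hi : ∑ l, M i l * exp (h l) ≤ hi * P := by
    rw [mul_sum]; gcongr with l; exact (hM i l).2
  have hcol_hi : ∑ k, M k j * exp (e k) ≤ hi * Q := by
    rw [mul_sum]; gcongr with k; exact (hM k j).2
  have hPQ : lo * P * Q ≤ Fintype.card ι := by
    have := sum_le_sum fun k (_ : k ∈ univ) =>
      (mul_le_mul_of_nonneg_left (hrow_lo k) (exp_pos (e k)).le).trans_eq (hrow' k)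
    simpa only [← sum_mul, sum_const, card_univ, nsmul_eq_mul, mul_one, mul_comm] using this
  have hrow_one : 1 ≤ exp (e i) * (hi * P) := (hrow' i).symm.le.trans (by gcongr)
  have hcol_one : 1 ≤ exp (h j) * (hi * Q) := (hcol' j).symm.le.trans (by gcongr)
  have h1 : 1 ≤ hi ^ 2 * (P * Q) * (exp (e i) * exp (h j)) :=
    (one_le_mul_of_one_le_of_one_le hrow_one hcol_one).trans_eq (by ring)
  rw [exp_add]
  nlinarith [mul_le_mul_of_nonneg_left hPQ
    (by positivity : 0 ≤ hi ^ 2 * (exp (e i) * exp (h j)))]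

theorem sum_mul_exp_sub_one_sub_le {M : ι → κ → ℝ} {eps : ℝ}
    (hrow : ∀ i, |∑ j, M i j - 1| ≤ eps) (hcol : ∀ j, |∑ i, M i j - 1| ≤ eps)
    (a : ι → ℝ) (b : κ → ℝ) :
    ∑ i, ∑ j, M i j * (exp (a i + b j) - 1 - (a i + b j)) ≤
      sinkhornObjective M a b - sinkhornObjective M 0 0 +
        eps * (∑ i, |a i| + ∑ j, |b j|) := by
  have hlin : ∑ i, ∑ j, M i j * (a i + b j) =
      ∑ i, a i * ∑ j, M i j + ∑ j, b j * ∑ i, M i j := by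
    simp only [mul_add, sum_add_distrib, mul_sum]
    rw [sum_comm (f := fun i j => M i j * b j)]
    simp only [mul_comm]
  have hrow' := sum_mul_le_mul_sum_abs (a := a) (u := fun i => 1 - ∑ j, M i j) fun i => by
    rw [abs_sub_comm]; exact hrow i
  have hcol' := sum_mul_le_mul_sum_abs (a := b) (u := fun j => 1 - ∑ i, M i j) fun j => by
    rw [abs_sub_comm]; exact hcol j
  simp only [mul_sub, mul_one, sum_sub_distrib, hlin, sinkhornObjective_zero] at hrow' hcol' ⊢
  simp only [sinkhornObjective]
  linarith

theorem mul_sum_sum_sq_le_sum_mul_exp_sub_one_sub {M x : ι → κ → ℝ} {lo m : ℝ} (hlo : 0 ≤ lo)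
    (hM : ∀ i j, lo ≤ M i j) (hm : 0 ≤ m) (hm1 : m ≤ 1) (hx : ∀ i j, m ≤ exp (x i j)) :
    lo * m / 2 * ∑ i, ∑ j, x i j ^ 2 ≤ ∑ i, ∑ j, M i j * (exp (x i j) - 1 - x i j) := by
  simp only [mul_sum]
  refine sum_le_sum fun i _ => sum_le_sum fun j _ => ?_
  calc lo * m / 2 * x i j ^ 2 = lo * (m * x i j ^ 2 / 2) := by ring
    _ ≤ M i j * (min 1 (exp (x i j)) * x i j ^ 2 / 2) :=
      mul_le_mul (hM i j) (by gcongr; exact le_min hm1 (hx i j)) (by positivity)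
        (hlo.trans (hM i j))
    _ ≤ M i j * (exp (x i j) - 1 - x i j) := by
      gcongr
      · exact hlo.trans (hM i j)
      · exact min_one_exp_mul_sq_div_two_le _

theorem sum_sum_add_sq_of_sum_eq_zero (a b : ι → ℝ) (hb : ∑ j, b j = 0) :
    ∑ i, ∑ j, (a i + b j) ^ 2 = Fintype.card ι * (∑ i, a i ^ 2 + ∑ j, b j ^ 2) := by
  simp only [add_sq, sum_add_distrib, sum_const, card_univ, nsmul_eq_mul, mul_assoc, ← mul_sum,
    hb, mul_zero, add_zero]
  ring

theorem abs_add_le_of_sum_sq_le {a b : ι → ℝ} {C : ℝ} (hC : 0 ≤ C)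
    (h : ∑ i, a i ^ 2 + ∑ i, b i ^ 2 ≤ C * (∑ i, |a i| + ∑ i, |b i|)) (i j : ι) :
    |a i + b j| ≤ 2 * C * √(Fintype.card ι) := by
  set n : ℝ := (Fintype.card ι : ℝ)
  set S := ∑ i, a i ^ 2 + ∑ i, b i ^ 2
  have hcs : ∀ f : ι → ℝ, (∑ i, |f i|) ^ 2 ≤ n * ∑ i, f i ^ 2 := fun f => by
    simpa only [sq_abs, card_univ] using sq_sum_le_card_mul_sum_sq (s := univ) (f := fun i => |f i|)
  have hL : (∑ i, |a i| + ∑ i, |b i|) ^ 2 ≤ 2 * n * S := by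
    nlinarith [hcs a, hcs b, sq_nonneg (∑ i, |a i| - ∑ i, |b i|)]
  have hS : S ≤ 2 * n * C ^ 2 := by
    have hSC : S ^ 2 ≤ C ^ 2 * (2 * n * S) := by
      calc S ^ 2 ≤ (C * (∑ i, |a i| + ∑ i, |b i|)) ^ 2 := pow_le_pow_left₀ (by positivity) h 2
        _ ≤ C ^ 2 * (2 * n * S) := by rw [mul_pow]; gcongr
    have hn : 0 ≤ n * C ^ 2 := by positivity
    nlinarith
  have hab : (a i + b j) ^ 2 ≤ 2 * S := by
    have ha := single_le_sum (fun k _ => sq_nonneg (a k)) (mem_univ i)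
    have hb := single_le_sum (fun k _ => sq_nonneg (b k)) (mem_univ j)
    nlinarith [sq_nonneg (a i - b j)]
  refine abs_le_of_sq_le_sq ?_ (by positivity)
  rw [mul_pow, sq_sqrt (Nat.cast_nonneg _)]
  nlinarith

theorem two_div_nine_le_exp_of_minimizer {M : ι → ι → ℝ} {e h : ι → ℝ}
    (hM : ∀ i j, 1 / (2 * Fintype.card ι) ≤ M i j ∧ M i j ≤ 3 / (2 * Fintype.card ι))
    (hmin : ∀ e' h', sinkhornObjective M e h ≤ sinkhornObjective M e' h') (i j : ι) :
    2 / 9 ≤ exp (e i + h j) := by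
  have hn : (0 : ℝ) < Fintype.card ι := Nat.cast_pos.2 (Fintype.card_pos_iff.2 ⟨i⟩)
  have := le_card_mul_sq_mul_exp_of_sum_eq_one (by positivity) hM
    (row_sum_eq_one_of_minimizer hmin) (col_sum_eq_one_of_minimizer hmin) i j
  have hscale : (Fintype.card ι : ℝ) * (3 / (2 * Fintype.card ι)) ^ 2 =
      9 / 2 * (1 / (2 * Fintype.card ι)) := by
    field_simp; ring
  rw [hscale, mul_assoc] at this
  nlinarith [one_div_pos.2 (by positivity : (0 : ℝ) < 2 * Fintype.card ι)]

theorem sum_sq_add_sum_sq_le_of_minimizer [Nonempty ι] {M : ι → ι → ℝ} {e h : ι → ℝ} {eps d : ℝ}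
    (hrow : ∀ i, |∑ j, M i j - 1| ≤ eps) (hcol : ∀ j, |∑ i, M i j - 1| ≤ eps)
    (hM : ∀ i j, 1 / (2 * Fintype.card ι) ≤ M i j) (hexp : ∀ i j, 2 / 9 ≤ exp (e i + h j))
    (hmin : ∀ e' h', sinkhornObjective M e h ≤ sinkhornObjective M e' h')
    (hd : ∑ j, (h j - d) = 0) :
    ∑ i, (e i + d) ^ 2 + ∑ j, (h j - d) ^ 2 ≤
      18 * eps * (∑ i, |e i + d| + ∑ j, |h j - d|) := by
  have hn : (0 : ℝ) < Fintype.card ι := Nat.cast_pos.2 Fintype.card_pos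
  have hab : ∀ i j, e i + d + (h j - d) = e i + h j := fun i j => by ring
  have hupper := sum_mul_exp_sub_one_sub_le hrow hcol (fun i => e i + d) (fun j => h j - d)
  have hF : sinkhornObjective M (fun i => e i + d) (fun j => h j - d) ≤
      sinkhornObjective M 0 0 := by
    rw [sinkhornObjective_add_sub_const]; exact hmin 0 0
  have hlower := mul_sum_sum_sq_le_sum_mul_exp_sub_one_sub
    (x := fun i j => e i + d + (h j - d)) (by positivity) hM (by norm_num) (by norm_num)
    fun i j => (hab i j).symm ▸ hexp i j
  rw [sum_sum_add_sq_of_sum_eq_zero _ _ hd] at hlower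
  have hscale : ∀ S : ℝ, 1 / (2 * Fintype.card ι) * (2 / 9) / 2 * (Fintype.card ι * S) = S / 18 :=
    fun S => by field_simp; ring
  rw [hscale] at hlower
  linarith

end Sinkhorn

theorem sinkhorn_potential_stability_general (q : ℕ) (M : Fin q → Fin q → ℝ)
    (hM : ∀ i j, |M i j - 1 / (q : ℝ)| ≤ 1 / (2 * (q : ℝ)))
    (eps : ℝ)
    (hcol : ∀ j, |∑ i, (M i j - 1 / (q : ℝ))| ≤ eps)
    (hrow : ∀ i, |∑ j, (M i j - 1 / (q : ℝ))| ≤ eps)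
    (es hs : Fin q → ℝ)
    (hmin : ∀ e' h' : Fin q → ℝ,
      (∑ i, ∑ j, M i j * Real.exp (es i + hs j)) - (∑ i, es i) - (∑ j, hs j) ≤
        (∑ i, ∑ j, M i j * Real.exp (e' i + h' j)) - (∑ i, e' i) - (∑ j, h' j)) :
    ∀ i j, |es i + hs j| ≤ 48 * Real.sqrt q * eps := by
  intro i j
  have : NeZero q := ⟨i.pos.ne'⟩
  have hq : (0 : ℝ) < q := Nat.cast_pos.2 i.pos
  have heps : 0 ≤ eps := (abs_nonneg _).trans (hcol j)
  have hdev : ∀ v : Fin q → ℝ, ∑ k, (v k - 1 / (q : ℝ)) = ∑ k, v k - 1 := fun v => by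
    simp [sum_sub_distrib, hq.ne']
  have hbounds := fun k l => mem_Icc_of_abs_sub_one_div_le (hM k l)
  have hmin' : ∀ e' h', sinkhornObjective M es hs ≤ sinkhornObjective M e' h' := hmin
  have hexp := two_div_nine_le_exp_of_minimizer (by simpa using hbounds) hmin'
  set d := (∑ l, hs l) / q
  have hd : ∑ l, (hs l - d) = 0 := by
    simp only [sum_sub_distrib, sum_const, card_univ, Fintype.card_fin, nsmul_eq_mul, d]
    field_simp
    ring
  have hsq := sum_sq_add_sum_sq_le_of_minimizer (fun k => hdev (M k) ▸ hrow k)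
    (fun l => hdev (M · l) ▸ hcol l) (by simpa using fun k l => (hbounds k l).1) hexp hmin' hd
  calc |es i + hs j| = |(es i + d) + (hs j - d)| := by ring_nf
    _ ≤ 2 * (18 * eps) * √(Fintype.card (Fin q)) :=
      abs_add_le_of_sum_sq_le (by positivity) hsq i j
    _ = 36 * √q * eps := by rw [Fintype.card_fin]; ring
    _ ≤ 48 * √q * eps := by gcongr; norm_num

/-- Let `M ∈ ℝ^{q×q}` with `|M_{ij} − 1/q| ≤ 1/(2q)` and let `ε` bound the absolute row and
column sums of `ε_{ij} = M_{ij} − 1/q`, with `ε ≤ 1/(24√q)`.  If `(ε*, η*)` minimizes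
`F(ε, η) = Σ_{ij} M_{ij} exp(ε_i + η_j) − Σ_i ε_i − Σ_j η_j`, then
`|ε*_i + η*_j| ≤ 48√q·ε` for all `i, j`. -/
theorem sinkhorn_potential_stability (q : ℕ) (hq : 0 < q) (M : Fin q → Fin q → ℝ)
    (hM : ∀ i j, |M i j - 1 / (q : ℝ)| ≤ 1 / (2 * (q : ℝ)))
    (eps : ℝ)
    (hcol : ∀ j, |∑ i, (M i j - 1 / (q : ℝ))| ≤ eps)
    (hrow : ∀ i, |∑ j, (M i j - 1 / (q : ℝ))| ≤ eps)
    (heps : eps ≤ 1 / (24 * Real.sqrt q))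
    (es hs : Fin q → ℝ)
    (hmin : ∀ e' h' : Fin q → ℝ,
      (∑ i, ∑ j, M i j * Real.exp (es i + hs j)) - (∑ i, es i) - (∑ j, hs j) ≤
        (∑ i, ∑ j, M i j * Real.exp (e' i + h' j)) - (∑ i, e' i) - (∑ j, h' j)) :
    ∀ i j, |es i + hs j| ≤ 48 * Real.sqrt q * eps :=
  sinkhorn_potential_stability_general q M hM eps hcol hrow es hs hmin
end

section
/- Let M ∈ ℝ^{q×q} satisfy |M_{ij} − 1/q| ≤ 1/(2q) for all i,j, and ε := max{‖Me − e‖_∞, ‖Mᵀe − e‖_∞} ≤ 1/(48√q) where e is the all-ones vector. If D₁, D₂ are (positive) diagonal matrices such that D₂MD₁ is doubly stochastic, then ‖D₂ ⊗ D₁ − I‖₂ ≤ 96√q·ε, where D₂ ⊗ D₁ is the Kronecker product and I the identity on ℝ^{q²}. -/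
/-!
Write `d₂ i * d₁ j = exp (x i j)` with `x i j = α i + β j` and `∑ α = 0`. Pairing the row and
column sums of the doubly stochastic matrix `M i j * exp (x i j)` and of `M` (call the latter
`rᵢ`, `cⱼ`) with `(α, β)` — the vanishing gradient of the Sinkhorn potential — gives
`∑ M i j * x i j * (exp (x i j) - 1) = ∑ α i * (1 - rᵢ) + ∑ β j * (1 - cⱼ) ≤ ε (‖α‖₁ + ‖β‖₁)`.
Comparing row, column and total sums shows `exp (x i j) ≥ 2 / 9`; then
`x (eˣ - 1) ≥ (2 / 9) x²` and `M i j ≥ 1 / (2q)` bound the left side below by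
`(‖α‖₂² + ‖β‖₂²) / 9`. Cauchy–Schwarz yields `|x i j| ≤ 18 √q ε ≤ 1`, hence
`|d₂ i * d₁ j - 1| ≤ 2 |x i j|`, and `D₂ ⊗ D₁ - I` is diagonal with these entries.
-/

open Matrix Finset Kronecker Real

theorem mul_sq_le_mul_exp_sub_one {c x : ℝ} (hc : c ≤ 1) (hcx : c ≤ exp x) :
    c * x ^ 2 ≤ x * (exp x - 1) := by
  rcases le_or_gt 0 x with hx | hx
  · nlinarith [add_one_le_exp x]
  · have h : exp x - 1 ≤ x * exp x := by
      have := mul_le_mul_of_nonneg_right (add_one_le_exp (-x)) (exp_pos x).le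
      rw [← exp_add, neg_add_cancel, exp_zero] at this
      linarith
    nlinarith [mul_le_mul_of_nonpos_left h hx.le, mul_le_mul_of_nonneg_left hcx (sq_nonneg x)]

theorem sum_sum_mul_add {ι κ R : Type*} [Fintype ι] [Fintype κ] [CommSemiring R]
    (A : Matrix ι κ R) (α : ι → R) (β : κ → R) :
    ∑ i, ∑ j, A i j * (α i + β j) = ∑ i, α i * ∑ j, A i j + ∑ j, β j * ∑ i, A i j := by
  simp only [mul_add, sum_add_distrib, mul_sum]
  rw [sum_comm (f := fun i j => A i j * β j)]
  simp only [mul_comm]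

theorem sum_sum_add_sq {ι κ R : Type*} [Fintype ι] [Fintype κ] [CommSemiring R]
    (α : ι → R) (β : κ → R) :
    ∑ i, ∑ j, (α i + β j) ^ 2 =
      Fintype.card κ * ∑ i, α i ^ 2 + 2 * (∑ i, α i) * (∑ j, β j) +
        Fintype.card ι * ∑ j, β j ^ 2 := by
  simp only [add_sq, sum_add_distrib, sum_const, card_univ, nsmul_eq_mul, mul_assoc, ← mul_sum,
    sum_mul_sum]

theorem abs_sum_sum_mul_diagonal_mul_le {κ : Type*} [Fintype κ] [DecidableEq κ] {w : κ → ℝ}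
    {C : ℝ} (hw : ∀ p, |w p| ≤ C) (v : κ → ℝ) :
    |∑ p, ∑ p', v p * diagonal w p p' * v p'| ≤ C * ∑ p, v p ^ 2 := by
  have hdiag : ∀ p, ∑ p', v p * diagonal w p p' * v p' = w p * v p ^ 2 := fun p => by
    rw [sum_eq_single p (fun p' _ h => by simp [diagonal_apply_ne _ h.symm]) (by simp)]
    simp only [diagonal_apply_eq]; ring
  rw [sum_congr rfl fun p _ => hdiag p, mul_sum]
  calc |∑ p, w p * v p ^ 2| ≤ ∑ p, |w p * v p ^ 2| := abs_sum_le_sum_abs _ _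
    _ ≤ ∑ p, C * v p ^ 2 := sum_le_sum fun p _ => by
        rw [abs_mul, abs_of_nonneg (sq_nonneg (v p))]; gcongr; exact hw p

section Sinkhorn

variable {ι : Type*} [Fintype ι] {M : Matrix ι ι ℝ} {d₁ d₂ : ι → ℝ}

theorem le_card_mul_sq_mul_of_scaling {a b : ℝ} (ha : 0 ≤ a) (hMa : ∀ i j, a ≤ M i j)
    (hMb : ∀ i j, M i j ≤ b) (hd₁ : ∀ j, 0 < d₁ j) (hd₂ : ∀ i, 0 < d₂ i)
    (hrow : ∀ i, ∑ j, d₂ i * M i j * d₁ j = 1) (hcol : ∀ j, ∑ i, d₂ i * M i j * d₁ j = 1)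
    (i j : ι) : a ≤ Fintype.card ι * b ^ 2 * (d₂ i * d₁ j) := by
  set U := ∑ k, d₂ k
  set V := ∑ k, d₁ k
  have hrow_le : 1 ≤ b * d₂ i * V := by
    rw [← hrow i, mul_sum]
    exact sum_le_sum fun k _ => by
      nlinarith [mul_le_mul_of_nonneg_right (hMb i k) (mul_pos (hd₂ i) (hd₁ k)).le]
  have hcol_le : 1 ≤ b * d₁ j * U := by
    rw [← hcol j, mul_sum]
    exact sum_le_sum fun k _ => by
      nlinarith [mul_le_mul_of_nonneg_right (hMb k j) (mul_pos (hd₂ k) (hd₁ j)).le]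
  have htotal : a * (U * V) ≤ Fintype.card ι := by
    calc a * (U * V) = ∑ k, ∑ l, d₂ k * a * d₁ l := by
          rw [sum_mul_sum, mul_sum]
          exact sum_congr rfl fun _ _ => by rw [mul_sum]; exact sum_congr rfl fun _ _ => by ring
      _ ≤ ∑ k, ∑ l, d₂ k * M k l * d₁ l := sum_le_sum fun k _ => sum_le_sum fun l _ => by
          gcongr
          · exact (hd₁ l).le
          · exact (hd₂ k).le
          · exact hMa k l
      _ = Fintype.card ι := by simp [hrow]
  calc a ≤ a * ((b * d₂ i * V) * (b * d₁ j * U)) := by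
        nlinarith [one_le_mul_of_one_le_of_one_le hrow_le hcol_le]
    _ = b ^ 2 * (d₂ i * d₁ j) * (a * (U * V)) := by ring
    _ ≤ b ^ 2 * (d₂ i * d₁ j) * Fintype.card ι :=
        mul_le_mul_of_nonneg_left htotal (mul_nonneg (sq_nonneg b) (mul_pos (hd₂ i) (hd₁ j)).le)
    _ = Fintype.card ι * b ^ 2 * (d₂ i * d₁ j) := by ring

theorem exists_log_scaling [Nonempty ι] (hd₁ : ∀ j, 0 < d₁ j) (hd₂ : ∀ i, 0 < d₂ i) :
    ∃ α β : ι → ℝ, ∑ i, α i = 0 ∧ ∀ i j, exp (α i + β j) = d₂ i * d₁ j := by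
  set s := (∑ i, log (d₂ i)) / Fintype.card ι
  refine ⟨fun i => log (d₂ i) - s, fun j => log (d₁ j) + s, ?_, fun i j => ?_⟩
  · simp only [sum_sub_distrib, sum_const, card_univ, nsmul_eq_mul, s]
    field_simp
    ring
  · rw [show log (d₂ i) - s + (log (d₁ j) + s) = log (d₂ i) + log (d₁ j) by ring,
      exp_add, exp_log (hd₂ i), exp_log (hd₁ j)]

theorem sum_sum_mul_add_mul_exp_sub_one {α β : ι → ℝ}
    (hrow : ∀ i, ∑ j, M i j * exp (α i + β j) = 1)
    (hcol : ∀ j, ∑ i, M i j * exp (α i + β j) = 1) :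
    ∑ i, ∑ j, M i j * ((α i + β j) * (exp (α i + β j) - 1)) =
      ∑ i, α i * (1 - ∑ j, M i j) + ∑ j, β j * (1 - ∑ i, M i j) := by
  have h := sum_sum_mul_add (fun i j => M i j * exp (α i + β j) - M i j) α β
  simp only [sum_sub_distrib, hrow, hcol] at h
  rw [← h]
  exact sum_congr rfl fun _ _ => sum_congr rfl fun _ _ => by ring

theorem mul_sum_sq_add_sum_sq_le {a c eps : ℝ} (ha : 0 ≤ a) (hc : 0 ≤ c) (hc1 : c ≤ 1)
    (hMa : ∀ i j, a ≤ M i j) (hrow : ∀ i, |∑ j, M i j - 1| ≤ eps)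
    (hcol : ∀ j, |∑ i, M i j - 1| ≤ eps) {α β : ι → ℝ} (hα : ∑ i, α i = 0)
    (hSrow : ∀ i, ∑ j, M i j * exp (α i + β j) = 1)
    (hScol : ∀ j, ∑ i, M i j * exp (α i + β j) = 1) (hexp : ∀ i j, c ≤ exp (α i + β j)) :
    a * c * Fintype.card ι * (∑ i, α i ^ 2 + ∑ j, β j ^ 2) ≤
      eps * (∑ i, |α i| + ∑ j, |β j|) := by
  have hdev {x s : ℝ} (hs : |s - 1| ≤ eps) : x * (1 - s) ≤ |x| * eps := by
    calc x * (1 - s) ≤ |x| * |s - 1| := by rw [← abs_sub_comm, ← abs_mul]; exact le_abs_self _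
      _ ≤ |x| * eps := by gcongr
  calc a * c * Fintype.card ι * (∑ i, α i ^ 2 + ∑ j, β j ^ 2)
      = ∑ i, ∑ j, a * (c * (α i + β j) ^ 2) := by
        simp only [← mul_sum, sum_sum_add_sq, hα]; ring
    _ ≤ ∑ i, ∑ j, M i j * ((α i + β j) * (exp (α i + β j) - 1)) :=
        sum_le_sum fun i _ => sum_le_sum fun j _ =>
          mul_le_mul (hMa i j) (mul_sq_le_mul_exp_sub_one hc1 (hexp i j)) (by positivity)
            (ha.trans (hMa i j))
    _ = ∑ i, α i * (1 - ∑ j, M i j) + ∑ j, β j * (1 - ∑ i, M i j) :=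
        sum_sum_mul_add_mul_exp_sub_one hSrow hScol
    _ ≤ ∑ i, |α i| * eps + ∑ j, |β j| * eps :=
        add_le_add (sum_le_sum fun i _ => hdev (hrow i)) (sum_le_sum fun j _ => hdev (hcol j))
    _ = eps * (∑ i, |α i| + ∑ j, |β j|) := by rw [← sum_mul, ← sum_mul]; ring

theorem abs_add_le_of_exp_scaling {a c eps : ℝ} (ha : 0 < a) (hc : 0 < c) (hc1 : c ≤ 1)
    (hMa : ∀ i j, a ≤ M i j) (hrow : ∀ i, |∑ j, M i j - 1| ≤ eps)
    (hcol : ∀ j, |∑ i, M i j - 1| ≤ eps) {α β : ι → ℝ} (hα : ∑ i, α i = 0)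
    (hSrow : ∀ i, ∑ j, M i j * exp (α i + β j) = 1)
    (hScol : ∀ j, ∑ i, M i j * exp (α i + β j) = 1) (hexp : ∀ i j, c ≤ exp (α i + β j))
    (i j : ι) :
    |α i + β j| ≤ 2 * √(Fintype.card ι) * eps / (a * c * Fintype.card ι) := by
  set n : ℝ := (Fintype.card ι : ℝ)
  set T := ∑ i, α i ^ 2 + ∑ j, β j ^ 2
  set L := ∑ i, |α i| + ∑ j, |β j|
  have hn : 0 < n := Nat.cast_pos.2 (Fintype.card_pos_iff.2 ⟨i⟩)
  have heps : 0 ≤ eps := (abs_nonneg _).trans (hrow i)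
  have hk : 0 < a * c * n := by positivity
  have hT : 0 ≤ T := by positivity
  have hkT : a * c * n * T ≤ eps * L :=
    mul_sum_sq_add_sum_sq_le ha.le hc.le hc1 hMa hrow hcol hα hSrow hScol hexp
  have hL : L ^ 2 ≤ 2 * n * T := by
    have hsq {f : ι → ℝ} : (∑ k, |f k|) ^ 2 ≤ n * ∑ k, f k ^ 2 := by
      simpa only [sq_abs, card_univ] using
        sq_sum_le_card_mul_sum_sq (s := univ) (f := fun k => |f k|)
    nlinarith [hsq (f := α), hsq (f := β), sq_nonneg (∑ k, |α k| - ∑ k, |β k|)]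
  have hk2T : (a * c * n) ^ 2 * T ≤ 2 * n * eps ^ 2 := by
    rcases hT.eq_or_lt with hT0 | hT0
    · rw [← hT0, mul_zero]; positivity
    · refine le_of_mul_le_mul_right ?_ hT0
      nlinarith [mul_le_mul hkT hkT (by positivity) (by positivity),
        mul_le_mul_of_nonneg_left hL (sq_nonneg eps)]
  have hx : (α i + β j) ^ 2 ≤ 2 * T := by
    nlinarith [single_le_sum (fun k _ => sq_nonneg (α k)) (mem_univ i),
      single_le_sum (fun k _ => sq_nonneg (β k)) (mem_univ j), sq_nonneg (α i - β j)]
  have hsqrt : (2 * √n * eps) ^ 2 = 4 * n * eps ^ 2 := by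
    rw [mul_pow, mul_pow, sq_sqrt hn.le]; ring
  rw [le_div_iff₀ hk, ← abs_of_pos hk, ← abs_mul, ← sq_le_sq₀ (abs_nonneg _) (by positivity),
    sq_abs, hsqrt]
  nlinarith [mul_le_mul_of_nonneg_left hx (sq_nonneg (a * c * n))]

theorem abs_mul_sub_one_le_of_scaling {eps : ℝ}
    (hM : ∀ i j, |M i j - 1 / (Fintype.card ι : ℝ)| ≤ 1 / (2 * (Fintype.card ι : ℝ)))
    (hrow : ∀ i, |∑ j, M i j - 1| ≤ eps) (hcol : ∀ j, |∑ i, M i j - 1| ≤ eps)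
    (heps : eps ≤ 1 / (48 * √(Fintype.card ι))) (hd₁ : ∀ j, 0 < d₁ j) (hd₂ : ∀ i, 0 < d₂ i)
    (hSrow : ∀ i, ∑ j, d₂ i * M i j * d₁ j = 1) (hScol : ∀ j, ∑ i, d₂ i * M i j * d₁ j = 1)
    (i j : ι) : |d₂ i * d₁ j - 1| ≤ 36 * √(Fintype.card ι) * eps := by
  set n : ℝ := (Fintype.card ι : ℝ)
  have : Nonempty ι := ⟨i⟩
  have hn : 0 < n := Nat.cast_pos.2 Fintype.card_pos
  have hMa : ∀ i j, 1 / (2 * n) ≤ M i j := fun i j => by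
    have h := (abs_le.1 (hM i j)).1
    have : 1 / n - 1 / (2 * n) = 1 / (2 * n) := by field_simp; ring
    linarith
  have hMb : ∀ i j, M i j ≤ 3 / (2 * n) := fun i j => by
    have h := (abs_le.1 (hM i j)).2
    have : 1 / n + 1 / (2 * n) = 3 / (2 * n) := by field_simp; ring
    linarith
  obtain ⟨α, β, hα, hexp⟩ := exists_log_scaling hd₁ hd₂
  have hc : ∀ i j, 2 / 9 ≤ exp (α i + β j) := fun i j => by
    have h := le_card_mul_sq_mul_of_scaling (by positivity) hMa hMb hd₁ hd₂ hSrow hScol i j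
    have : n * (3 / (2 * n)) ^ 2 = 9 / 4 * (1 / n) := by field_simp; ring
    rw [this, show 1 / (2 * n) = 1 / 2 * (1 / n) by ring] at h
    rw [hexp]
    nlinarith [one_div_pos.2 hn]
  have hscaled : ∀ i j, M i j * exp (α i + β j) = d₂ i * M i j * d₁ j := fun i j => by
    rw [hexp]; ring
  have hx := abs_add_le_of_exp_scaling (by positivity) (by norm_num) (by norm_num) hMa hrow hcol hα
    (by simpa only [hscaled]) (by simpa only [hscaled]) hc i j
  rw [show 1 / (2 * n) * (2 / 9) * n = 1 / 9 by field_simp] at hx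
  have hεn : √n * eps ≤ 1 / 48 := by
    rw [le_div_iff₀ (by positivity)] at heps
    rw [le_div_iff₀ (by norm_num)]; linarith
  have hx1 : |α i + β j| ≤ 1 := by linarith
  calc |d₂ i * d₁ j - 1| = |exp (α i + β j) - 1| := by rw [hexp]
    _ ≤ 2 * |α i + β j| := abs_exp_sub_one_le hx1
    _ ≤ 36 * √n * eps := by linarith

end Sinkhorn

theorem sinkhorn_scaling_stability_general (q : ℕ) (M : Matrix (Fin q) (Fin q) ℝ)
    (hM : ∀ i j, |M i j - 1 / (q : ℝ)| ≤ 1 / (2 * (q : ℝ)))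
    (eps : ℝ)
    (hrow : ∀ i, |(∑ j, M i j) - 1| ≤ eps)
    (hcol : ∀ j, |(∑ i, M i j) - 1| ≤ eps)
    (heps : eps ≤ 1 / (48 * Real.sqrt q))
    (d₁ d₂ : Fin q → ℝ) (hd₁ : ∀ i, 0 < d₁ i) (hd₂ : ∀ i, 0 < d₂ i)
    (hDSrow : ∀ i, ∑ j, (Matrix.diagonal d₂ * M * Matrix.diagonal d₁) i j = 1)
    (hDScol : ∀ j, ∑ i, (Matrix.diagonal d₂ * M * Matrix.diagonal d₁) i j = 1) :
    ∀ v : Fin q × Fin q → ℝ,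
      |∑ p, ∑ p', v p * ((Matrix.diagonal d₂ ⊗ₖ Matrix.diagonal d₁ - 1) p p') * v p'| ≤
        96 * Real.sqrt q * eps * ∑ p, (v p) ^ 2 := by
  simp only [mul_diagonal, diagonal_mul] at hDSrow hDScol
  have hentry := abs_mul_sub_one_le_of_scaling (by simpa using hM) hrow hcol
    (by simpa using heps) hd₁ hd₂ hDSrow hDScol
  rw [Fintype.card_fin] at hentry
  intro v
  rw [diagonal_kronecker_diagonal, ← diagonal_one, diagonal_sub]
  refine abs_sum_sum_mul_diagonal_mul_le (fun p => ?_) v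
  have heps0 : 0 ≤ eps := (abs_nonneg _).trans (hrow p.1)
  exact (hentry p.1 p.2).trans (by nlinarith [mul_nonneg (sqrt_nonneg (q : ℝ)) heps0])

/-- Local stability of Sinkhorn (matrix) scaling.  Let `M ∈ ℝ^{q×q}` satisfy
`|M_{ij} − 1/q| ≤ 1/(2q)` and `ε := max{‖Me − e‖_∞, ‖Mᵀe − e‖_∞} ≤ 1/(48√q)` (stated via an
upper bound `eps` on all the row- and column-sum deviations).  If `D₁ = diag d₁`,
`D₂ = diag d₂` are positive diagonal matrices such that `D₂ M D₁` is doubly stochastic, then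
`‖D₂ ⊗ D₁ − I‖₂ ≤ 96 √q ε` (the spectral-norm bound stated through quadratic forms, since
`D₂ ⊗ D₁ − I` is symmetric). -/
theorem sinkhorn_scaling_stability (q : ℕ) (hq : 0 < q) (M : Matrix (Fin q) (Fin q) ℝ)
    (hM : ∀ i j, |M i j - 1 / (q : ℝ)| ≤ 1 / (2 * (q : ℝ)))
    (eps : ℝ)
    (hrow : ∀ i, |(∑ j, M i j) - 1| ≤ eps)
    (hcol : ∀ j, |(∑ i, M i j) - 1| ≤ eps)
    (heps : eps ≤ 1 / (48 * Real.sqrt q))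
    (d₁ d₂ : Fin q → ℝ) (hd₁ : ∀ i, 0 < d₁ i) (hd₂ : ∀ i, 0 < d₂ i)
    (hDSnonneg : ∀ i j, 0 ≤ (Matrix.diagonal d₂ * M * Matrix.diagonal d₁) i j)
    (hDSrow : ∀ i, ∑ j, (Matrix.diagonal d₂ * M * Matrix.diagonal d₁) i j = 1)
    (hDScol : ∀ j, ∑ i, (Matrix.diagonal d₂ * M * Matrix.diagonal d₁) i j = 1) :
    ∀ v : Fin q × Fin q → ℝ,
      |∑ p, ∑ p', v p * ((Matrix.diagonal d₂ ⊗ₖ Matrix.diagonal d₁ - 1) p p') * v p'| ≤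
        96 * Real.sqrt q * eps * ∑ p, (v p) ^ 2 :=
  sinkhorn_scaling_stability_general q M hM eps hrow hcol heps d₁ d₂ hd₁ hd₂ hDSrow hDScol
end

section
/- Let v be a uniformly random unit vector in ℝ^q and B ∈ ℝ^{q×q} a skew-symmetric matrix with ‖B‖_F = 1. Then E[VᵀBV E₁₁ VᵀBᵀV] = (I − E₁₁)/(q(q−1)), where V is a Haar-distributed q×q orthogonal matrix and E₁₁ = e₁e₁ᵀ. -/
open MeasureTheory Matrix Finset

/-- Matrices carry the (Borel) product measurable structure of `Fin n → Fin m → ℝ`. -/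
instance matrixMeasurableSpace (n m : ℕ) : MeasurableSpace (Matrix (Fin n) (Fin m) ℝ) :=
  inferInstanceAs (MeasurableSpace (Fin n → Fin m → ℝ))

/-!
Write `F(W) = WᵀBW E₁₁ WᵀBᵀW`. Whenever `R E₁₁ Rᵀ = E₁₁` we have `F(WR) = Rᵀ F(W) R`, so
right invariance of the Haar measure under coordinate reflections kills the off-diagonal
entries of `E[F]`, and invariance under transpositions fixing `1` makes its diagonal entries
`2, …, q` equal. The entry `F(W)₁₁ = ((WᵀBW)₁₁)²` vanishes because `WᵀBW` is skew, and
`tr F(W) = (Wᵀ BᵀB W)₁₁` has expectation `tr(BᵀB)/q`: by transpositions all diagonal entries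
of `Wᵀ BᵀB W` have the same expectation, and they sum to `tr(BᵀB)`.
Right invariance follows from left invariance: for independent Haar `V₁, V₂`, the matrix
`V₁ᵀV₂` is distributed both as `V` and as `Vᵀ`.
-/

instance matrixBorelSpace (n m : ℕ) : BorelSpace (Matrix (Fin n) (Fin m) ℝ) :=
  inferInstanceAs (BorelSpace (Fin n → Fin m → ℝ))

instance matrixSecondCountableTopology (n m : ℕ) :
    SecondCountableTopology (Matrix (Fin n) (Fin m) ℝ) :=
  inferInstanceAs (SecondCountableTopology (Fin n → Fin m → ℝ))

namespace Matrix

variable {n : Type*}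

theorem abs_apply_le_one_of_transpose_mul_self_eq_one [Fintype n] [DecidableEq n]
    {W : Matrix n n ℝ} (hW : Wᵀ * W = 1) (i j : n) : |W i j| ≤ 1 := by
  have hU : W ∈ unitaryGroup n ℝ := by
    rwa [mem_unitaryGroup_iff', star_eq_conjTranspose, conjTranspose_eq_transpose_of_trivial]
  simpa using entry_norm_bound_of_unitary hU i j

section Reflection

variable [DecidableEq n]

def coordReflection (a : n) : Matrix n n ℝ := diagonal (Function.update 1 a (-1))

theorem coordReflection_transpose (a : n) : (coordReflection a)ᵀ = coordReflection a :=
  diagonal_transpose _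

variable [Fintype n]

theorem coordReflection_mul_self (a : n) : coordReflection a * coordReflection a = 1 := by
  rw [coordReflection, diagonal_mul_diagonal, ← diagonal_one]
  congr 1
  ext c
  rcases eq_or_ne c a with rfl | hc <;> simp [Function.update_of_ne, *]

theorem coordReflection_conj_apply_of_ne (N : Matrix n n ℝ) {a b : n} (hab : a ≠ b) :
    ((coordReflection a)ᵀ * N * coordReflection a) a b = -N a b := by
  simp [coordReflection, hab.symm]

theorem coordReflection_conj_single (a z : n) :
    coordReflection a * single z z 1 * (coordReflection a)ᵀ = single z z 1 :=
  calc coordReflection a * single z z 1 * (coordReflection a)ᵀ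
      = single z z 1 * (coordReflection a * coordReflection a) := by
        rw [coordReflection_transpose, ← diagonal_single, coordReflection,
          (commute_diagonal _ _).eq, Matrix.mul_assoc]
    _ = single z z 1 := by rw [coordReflection_mul_self, Matrix.mul_one]

theorem swap_transpose_mul_self (a b : n) : (swap ℝ a b)ᵀ * swap ℝ a b = 1 := by
  rw [transpose_swap, swap_mul_self]

theorem swap_conj_apply_self (N : Matrix n n ℝ) (a b : n) :
    ((swap ℝ a b)ᵀ * N * swap ℝ a b) a a = N b b := by
  rw [transpose_swap, Matrix.mul_assoc, swap_mul_apply_left, mul_swap_apply_left]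

theorem swap_conj_single_of_ne {a b z : n} (ha : a ≠ z) (hb : b ≠ z) :
    swap ℝ a b * single z z 1 * (swap ℝ a b)ᵀ = single z z 1 := by
  rw [transpose_swap, swap, PEquiv.toMatrix_toPEquiv_mul, PEquiv.mul_toMatrix_toPEquiv]
  simp [Equiv.swap_apply_of_ne_of_ne ha.symm hb.symm]

end Reflection

section Sandwich

variable [Fintype n]

def conjSandwich (B E W : Matrix n n ℝ) : Matrix n n ℝ := Wᵀ * B * W * E * Wᵀ * Bᵀ * W

theorem continuous_conjSandwich (B E : Matrix n n ℝ) : Continuous (conjSandwich B E) := by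
  unfold conjSandwich
  fun_prop

theorem conjSandwich_mul_right {R E : Matrix n n ℝ} (hRE : R * E * Rᵀ = E)
    (B W : Matrix n n ℝ) :
    conjSandwich B E (W * R) = Rᵀ * conjSandwich B E W * R := by
  conv_rhs => rw [← hRE]
  simp only [conjSandwich, transpose_mul, Matrix.mul_assoc]

theorem transpose_mul_mul_apply_self_of_skew {B : Matrix n n ℝ} (hB : Bᵀ = -B)
    (W : Matrix n n ℝ) (c : n) : (Wᵀ * B * W) c c = 0 := by
  have h : (Wᵀ * B * W)ᵀ = -(Wᵀ * B * W) := by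
    simp [transpose_mul, hB, Matrix.mul_assoc]
  have hc := congr_fun (congr_fun h c) c
  rw [transpose_apply, neg_apply] at hc
  linarith

variable [DecidableEq n]

theorem mul_single_mul_apply (M N : Matrix n n ℝ) (z i j : n) :
    (M * single z z (1 : ℝ) * N) i j = M i z * N z j := by
  rw [mul_apply, sum_eq_single z (fun k _ hk => by simp [hk]) (by simp), mul_single_apply_same,
    mul_one]

theorem conjSandwich_single_apply (B W : Matrix n n ℝ) (z i j : n) :
    conjSandwich B (single z z 1) W i j = (Wᵀ * B * W) i z * (Wᵀ * B * W) j z := by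
  have h : conjSandwich B (single z z 1) W = Wᵀ * B * W * single z z 1 * (Wᵀ * B * W)ᵀ := by
    simp only [conjSandwich, transpose_mul, transpose_transpose, Matrix.mul_assoc]
  rw [h, mul_single_mul_apply, transpose_apply]

theorem conjSandwich_single_apply_self_of_skew {B : Matrix n n ℝ} (hB : Bᵀ = -B)
    (W : Matrix n n ℝ) (z : n) : conjSandwich B (single z z 1) W z z = 0 := by
  rw [conjSandwich_single_apply, transpose_mul_mul_apply_self_of_skew hB, zero_mul]

theorem trace_conjSandwich_single {W : Matrix n n ℝ} (hW : W * Wᵀ = 1) (B : Matrix n n ℝ)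
    (z : n) :
    trace (conjSandwich B (single z z 1) W) = (Wᵀ * (Bᵀ * B) * W) z z := by
  have h : (Wᵀ * B * W)ᵀ * (Wᵀ * B * W) = Wᵀ * (Bᵀ * B) * W := by
    simp only [transpose_mul, transpose_transpose, Matrix.mul_assoc]
    rw [← Matrix.mul_assoc W, hW, Matrix.one_mul]
  rw [← h, mul_apply]
  simp only [Matrix.trace, Matrix.diag_apply, conjSandwich_single_apply, transpose_apply]

end Sandwich

end Matrix

theorem MeasureTheory.Measure.map_prod_eq_of_ae_map_eq {α β γ : Type*} [MeasurableSpace α]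
    [MeasurableSpace β] [MeasurableSpace γ] {μ : Measure α} [IsProbabilityMeasure μ]
    {ν : Measure β} [SFinite ν] {ρ : Measure γ} {g : α × β → γ} (hg : Measurable g)
    (h : ∀ᵐ x ∂μ, ν.map (fun y => g (x, y)) = ρ) : (μ.prod ν).map g = ρ := by
  ext s hs
  rw [map_apply hg hs, prod_apply (hg hs)]
  have hslice : ∀ᵐ x ∂μ, ν (Prod.mk x ⁻¹' (g ⁻¹' s)) = ρ s := by
    filter_upwards [h] with x hx
    rw [← hx, Measure.map_apply (f := fun y => g (x, y)) (hg.comp measurable_prodMk_left) hs]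
    rfl
  rw [lintegral_congr_ae hslice, lintegral_const, measure_univ, mul_one]

/-- Left-invariant measure on `O(q)`, modelled as a measure on all `q × q` matrices. -/
structure IsHaarOrthogonal {q : ℕ} (ν : Measure (Matrix (Fin q) (Fin q) ℝ)) : Prop where
  ae_transpose_mul_self : ∀ᵐ W ∂ν, Wᵀ * W = 1
  map_mul_left : ∀ Q : Matrix (Fin q) (Fin q) ℝ, Qᵀ * Q = 1 → ν.map (Q * ·) = ν

namespace IsHaarOrthogonal

variable {q : ℕ} {ν : Measure (Matrix (Fin q) (Fin q) ℝ)}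

theorem map_transpose_map_mul_right (hν : IsHaarOrthogonal ν) {R : Matrix (Fin q) (Fin q) ℝ}
    (hR : Rᵀ * R = 1) : (ν.map transpose).map (· * R) = ν.map transpose := by
  have hRt : Rᵀᵀ * Rᵀ = 1 := by rw [transpose_transpose, mul_eq_one_comm.mp hR]
  have hcomm : (· * R) ∘ transpose = transpose ∘ (Rᵀ * ·) := by
    funext W
    simp [transpose_mul]
  have hT : Measurable (transpose : Matrix (Fin q) (Fin q) ℝ → _) :=
    continuous_id.matrix_transpose.measurable
  rw [Measure.map_map (continuous_mul_const R).measurable hT, hcomm,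
    ← Measure.map_map hT (continuous_const_mul Rᵀ).measurable, hν.map_mul_left Rᵀ hRt]

theorem map_transpose [IsProbabilityMeasure ν] (hν : IsHaarOrthogonal ν) :
    ν.map transpose = ν := by
  have hT : Measurable (transpose : Matrix (Fin q) (Fin q) ℝ → _) :=
    continuous_id.matrix_transpose.measurable
  have hg : Measurable
      fun p : Matrix (Fin q) (Fin q) ℝ × Matrix (Fin q) (Fin q) ℝ => p.1ᵀ * p.2 :=
    (continuous_fst.matrix_transpose.matrix_mul continuous_snd).measurable
  have hleft : (ν.prod ν).map (fun p => p.1ᵀ * p.2) = ν := by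
    refine Measure.map_prod_eq_of_ae_map_eq hg ?_
    filter_upwards [hν.ae_transpose_mul_self] with W hW
    exact hν.map_mul_left Wᵀ (by rw [transpose_transpose, mul_eq_one_comm.mp hW])
  have hright : (ν.prod ν).map (fun p => p.2ᵀ * p.1) = ν.map transpose := by
    refine Measure.map_prod_eq_of_ae_map_eq
      (continuous_snd.matrix_transpose.matrix_mul continuous_fst).measurable ?_
    filter_upwards [hν.ae_transpose_mul_self] with W hW
    rw [← hν.map_transpose_map_mul_right hW,
      Measure.map_map (continuous_mul_const W).measurable hT]
    rfl
  calc ν.map transpose = (ν.prod ν).map (fun p => p.2ᵀ * p.1) := hright.symm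
    _ = ((ν.prod ν).map Prod.swap).map (fun p => p.1ᵀ * p.2) := by
      rw [Measure.map_map hg measurable_swap]
      rfl
    _ = ν := by rw [Measure.prod_swap, hleft]

theorem map_mul_right [IsProbabilityMeasure ν] (hν : IsHaarOrthogonal ν)
    {R : Matrix (Fin q) (Fin q) ℝ} (hR : Rᵀ * R = 1) : ν.map (· * R) = ν := by
  conv_lhs => rw [← hν.map_transpose]
  rw [hν.map_transpose_map_mul_right hR, hν.map_transpose]

theorem integral_comp_mul_right [IsProbabilityMeasure ν] (hν : IsHaarOrthogonal ν)
    {f : Matrix (Fin q) (Fin q) ℝ → ℝ} (hf : Measurable f) {R : Matrix (Fin q) (Fin q) ℝ}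
    (hR : Rᵀ * R = 1) : ∫ W, f (W * R) ∂ν = ∫ W, f W ∂ν := by
  rw [← integral_map (continuous_mul_const R).measurable.aemeasurable
    (by rw [hν.map_mul_right hR]; exact hf.aestronglyMeasurable), hν.map_mul_right hR]

theorem integrable_of_continuous [IsFiniteMeasure ν] (hν : IsHaarOrthogonal ν)
    {f : Matrix (Fin q) (Fin q) ℝ → ℝ} (hf : Continuous f) : Integrable f ν := by
  have hK : IsCompact {W : Matrix (Fin q) (Fin q) ℝ | ∀ i j, W i j ∈ Set.Icc (-1 : ℝ) 1} := by
    have h := isCompact_univ_pi fun _ : Fin q => isCompact_univ_pi fun _ : Fin q =>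
      isCompact_Icc (a := (-1 : ℝ)) (b := 1)
    simp only [Set.pi, Set.mem_univ, true_implies] at h
    exact h
  obtain ⟨C, hC⟩ := hK.exists_bound_of_continuousOn hf.continuousOn
  refine Integrable.of_bound hf.measurable.aestronglyMeasurable C ?_
  filter_upwards [hν.ae_transpose_mul_self] with W hW
  exact hC W fun i j => abs_le.mp (abs_apply_le_one_of_transpose_mul_self_eq_one hW i j)

theorem integral_conj_apply [IsProbabilityMeasure ν] (hν : IsHaarOrthogonal ν)
    {G : Matrix (Fin q) (Fin q) ℝ → Matrix (Fin q) (Fin q) ℝ} (hG : Continuous G)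
    {R : Matrix (Fin q) (Fin q) ℝ} (hR : Rᵀ * R = 1) (hGR : ∀ W, G (W * R) = Rᵀ * G W * R)
    (i j : Fin q) : ∫ W, (Rᵀ * G W * R) i j ∂ν = ∫ W, G W i j ∂ν := by
  simp_rw [← hGR]
  exact hν.integral_comp_mul_right (hG.matrix_elem i j).measurable hR

theorem integral_apply_eq_zero_of_coordReflection [IsProbabilityMeasure ν]
    (hν : IsHaarOrthogonal ν) {G : Matrix (Fin q) (Fin q) ℝ → Matrix (Fin q) (Fin q) ℝ}
    (hG : Continuous G) {a b : Fin q} (hab : a ≠ b)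
    (hGR : ∀ W, G (W * coordReflection a) = (coordReflection a)ᵀ * G W * coordReflection a) :
    ∫ W, G W a b ∂ν = 0 := by
  have hR : (coordReflection a)ᵀ * coordReflection a = 1 := by
    rw [coordReflection_transpose, coordReflection_mul_self]
  have h := hν.integral_conj_apply hG hR hGR a b
  simp only [coordReflection_conj_apply_of_ne _ hab, integral_neg] at h
  linarith

theorem integral_apply_self_eq_of_swap [IsProbabilityMeasure ν] (hν : IsHaarOrthogonal ν)
    {G : Matrix (Fin q) (Fin q) ℝ → Matrix (Fin q) (Fin q) ℝ} (hG : Continuous G) {a b : Fin q}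
    (hGR : ∀ W, G (W * swap ℝ a b) = (swap ℝ a b)ᵀ * G W * swap ℝ a b) :
    ∫ W, G W a a ∂ν = ∫ W, G W b b ∂ν := by
  simpa only [swap_conj_apply_self] using
    (hν.integral_conj_apply hG (swap_transpose_mul_self a b) hGR a a).symm

theorem integral_transpose_mul_mul_apply_self [IsProbabilityMeasure ν]
    (hν : IsHaarOrthogonal ν) (A : Matrix (Fin q) (Fin q) ℝ) (c : Fin q) :
    ∫ W, (Wᵀ * A * W) c c ∂ν = trace A / q := by
  have hcont : Continuous fun W : Matrix (Fin q) (Fin q) ℝ => Wᵀ * A * W := by fun_prop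
  have hequal (c' : Fin q) : ∫ W, (Wᵀ * A * W) c' c' ∂ν = ∫ W, (Wᵀ * A * W) c c ∂ν :=
    hν.integral_apply_self_eq_of_swap hcont fun W => by
      simp only [transpose_mul, Matrix.mul_assoc]
  have htrace : ∀ᵐ W ∂ν, trace (Wᵀ * A * W) = trace A := by
    filter_upwards [hν.ae_transpose_mul_self] with W hW
    rw [trace_mul_cycle, mul_eq_one_comm.mp hW, Matrix.one_mul]
  have hsum : ∑ c', ∫ W, (Wᵀ * A * W) c' c' ∂ν = trace A := by
    rw [← integral_finsetSum _ fun c' _ => hν.integrable_of_continuous (hcont.matrix_elem c' c')]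
    exact (integral_congr_ae htrace).trans (by simp)
  rw [sum_congr rfl fun c' _ => hequal c', sum_const, card_univ, Fintype.card_fin,
    nsmul_eq_mul] at hsum
  have hq : (q : ℝ) ≠ 0 := Nat.cast_ne_zero.mpr c.pos.ne'
  rw [← hsum]
  field_simp

theorem integral_conjSandwich_single_apply_of_ne [IsProbabilityMeasure ν]
    (hν : IsHaarOrthogonal ν) (B : Matrix (Fin q) (Fin q) ℝ) (z : Fin q) {a b : Fin q}
    (hab : a ≠ b) : ∫ W, conjSandwich B (single z z 1) W a b ∂ν = 0 :=
  hν.integral_apply_eq_zero_of_coordReflection (continuous_conjSandwich _ _) hab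
    (conjSandwich_mul_right (coordReflection_conj_single a z) B)

theorem integral_conjSandwich_single_apply_self_of_ne [IsProbabilityMeasure ν]
    (hν : IsHaarOrthogonal ν) {B : Matrix (Fin q) (Fin q) ℝ} (hB : Bᵀ = -B) {z a : Fin q}
    (ha : a ≠ z) :
    ∫ W, conjSandwich B (single z z 1) W a a ∂ν = trace (Bᵀ * B) / (q * (q - 1)) := by
  have hcont := continuous_conjSandwich B (single z z (1 : ℝ))
  have hequal (c) (hc : c ∈ univ.erase z) : ∫ W, conjSandwich B (single z z 1) W c c ∂ν =
      ∫ W, conjSandwich B (single z z 1) W a a ∂ν :=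
    hν.integral_apply_self_eq_of_swap hcont
      (conjSandwich_mul_right (swap_conj_single_of_ne (ne_of_mem_erase hc) ha) B)
  have htrace : ∑ c, ∫ W, conjSandwich B (single z z 1) W c c ∂ν = trace (Bᵀ * B) / q := by
    rw [← integral_finsetSum _ fun c _ => hν.integrable_of_continuous (hcont.matrix_elem c c),
      ← hν.integral_transpose_mul_mul_apply_self _ z]
    refine integral_congr_ae ?_
    filter_upwards [hν.ae_transpose_mul_self] with W hW
    exact trace_conjSandwich_single (mul_eq_one_comm.mp hW) B z
  rw [← add_sum_erase _ _ (mem_univ z), sum_congr rfl hequal, sum_const,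
    card_erase_of_mem (mem_univ z), card_univ, Fintype.card_fin, nsmul_eq_mul]
    at htrace
  simp only [conjSandwich_single_apply_self_of_skew hB, integral_zero, zero_add] at htrace
  have hq : 1 < q := Fin.nontrivial_iff_two_le.mp ⟨a, z, ha⟩
  have hq0 : (q : ℝ) ≠ 0 := by positivity
  have hq1 : (q : ℝ) - 1 ≠ 0 := sub_ne_zero.mpr (by exact_mod_cast hq.ne')
  rw [Nat.cast_pred (by omega), eq_div_iff hq0] at htrace
  rw [eq_div_iff (mul_ne_zero hq0 hq1)]
  linear_combination htrace

theorem integral_conjSandwich_single_apply [IsProbabilityMeasure ν] (hν : IsHaarOrthogonal ν)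
    {B : Matrix (Fin q) (Fin q) ℝ} (hB : Bᵀ = -B) (z a b : Fin q) :
    ∫ W, conjSandwich B (single z z 1) W a b ∂ν =
      (1 - single z z 1 : Matrix (Fin q) (Fin q) ℝ) a b * trace (Bᵀ * B) / (q * (q - 1)) := by
  rcases eq_or_ne a b with rfl | hab
  · rcases eq_or_ne a z with rfl | ha
    · simp [conjSandwich_single_apply_self_of_skew hB]
    · simp [hν.integral_conjSandwich_single_apply_self_of_ne hB ha, ha.symm]
  · have hE : single z z (1 : ℝ) a b = 0 :=
      single_apply_of_ne _ _ _ _ _ fun h => hab (h.1.symm.trans h.2)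
    simp [hν.integral_conjSandwich_single_apply_of_ne B z hab, hab, hE]

end IsHaarOrthogonal

theorem isHaarOrthogonal_map {q : ℕ} {Ω : Type*} [MeasurableSpace Ω] {μ : Measure Ω}
    {V : Ω → Matrix (Fin q) (Fin q) ℝ} (hV : Measurable V) (horth : ∀ᵐ ω ∂μ, (V ω)ᵀ * V ω = 1)
    (hinv : ∀ Q : Matrix (Fin q) (Fin q) ℝ, Qᵀ * Q = 1 →
      Measure.map (fun ω => Q * V ω) μ = Measure.map V μ) :
    IsHaarOrthogonal (μ.map V) where
  ae_transpose_mul_self :=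
    (ae_map_iff hV.aemeasurable
      (isClosed_eq (by fun_prop) continuous_const).measurableSet).2 horth
  map_mul_left Q hQ := by
    rw [Measure.map_map (continuous_const_mul Q).measurable hV]
    exact hinv Q hQ

/-- Let `V` be a Haar-distributed `q×q` orthogonal matrix (`q ≥ 2`), characterized by being
almost surely orthogonal with law invariant under left multiplication by any orthogonal
matrix, and let `B ∈ ℝ^{q×q}` be skew-symmetric with `‖B‖_F = 1`.  Then
`E[Vᵀ B V E₁₁ Vᵀ Bᵀ V] = (I − E₁₁)/(q(q−1))`, where `E₁₁ = e₁e₁ᵀ`. -/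
theorem skew_conjugation_expectation (q : ℕ) (hq : 2 ≤ q)
    (Ω : Type*) [MeasurableSpace Ω] (μ : Measure Ω) [IsProbabilityMeasure μ]
    (V : Ω → Matrix (Fin q) (Fin q) ℝ) (hVmeas : Measurable V)
    (hVorth : ∀ᵐ ω ∂μ, (V ω)ᵀ * V ω = 1)
    (hVinv : ∀ Q : Matrix (Fin q) (Fin q) ℝ, Qᵀ * Q = 1 →
      Measure.map (fun ω => Q * V ω) μ = Measure.map V μ)
    (B : Matrix (Fin q) (Fin q) ℝ) (hBskew : Bᵀ = -B)
    (hBnorm : Matrix.trace (Bᵀ * B) = 1) :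
    ∀ a b : Fin q,
      ∫ ω, (((V ω)ᵀ * B * V ω *
          Matrix.single (⟨0, by omega⟩ : Fin q) (⟨0, by omega⟩ : Fin q) (1 : ℝ) *
          (V ω)ᵀ * Bᵀ * V ω : Matrix (Fin q) (Fin q) ℝ)) a b ∂μ =
        (((1 : Matrix (Fin q) (Fin q) ℝ) -
            Matrix.single (⟨0, by omega⟩ : Fin q) (⟨0, by omega⟩ : Fin q) (1 : ℝ)
          : Matrix (Fin q) (Fin q) ℝ)) a b /
          ((q : ℝ) * ((q : ℝ) - 1)) := by
  intro a b
  have : IsProbabilityMeasure (μ.map V) := Measure.isProbabilityMeasure_map hVmeas.aemeasurable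
  have h := (isHaarOrthogonal_map hVmeas hVorth hVinv).integral_conjSandwich_single_apply hBskew
    ⟨0, by omega⟩ a b
  rw [integral_map hVmeas.aemeasurable
    ((continuous_conjSandwich _ _).matrix_elem a b).aestronglyMeasurable, hBnorm, mul_one] at h
  exact h
end

section
/- Let 𝒳*, D : ℝⁿ → V be linear maps into an inner product space V, let Λ > 0, and suppose ‖(1/(nΛ))𝒳*𝒳*' − I‖₂ ≤ 1/6 and ‖D‖₂ ≤ √(nΛ)/20. Then 𝒳* ∘ (𝒳* + D)⁺ = I − (1/(nΛ))D∘𝒳*' + F, where (𝒳*+D)⁺ is the Moore–Penrose pseudoinverse and ‖F‖₂ ≤ 16ω² + 2ω·(Δ/Λ) with ω = ‖D‖₂/√(nΛ) and Δ/Λ = ‖(1/(nΛ))𝒳*𝒳*' − I‖₂. -/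
open ContinuousLinearMap

lemma pe_arith (u v e q k w : ℝ) (hu0 : 0 ≤ u) (hv0 : 0 ≤ v) (he0 : 0 ≤ e)
    (hq0 : 0 ≤ q) (hk0 : 0 ≤ k) (hw0 : 0 ≤ w)
    (hu : u ≤ 1/20) (hv : v ≤ 13/12) (he : e ≤ 1/6)
    (hq : q ≤ e + 2*(u*v) + u^2) (hk : k ≤ 1 + q*k) (hw : w ≤ q*k) :
    u*v*w + u^2*k ≤ 16*u^2 + 2*u*e := by
  have huv0 : 0 ≤ u*v := mul_nonneg hu0 hv0
  have hue0 : 0 ≤ u*e := mul_nonneg hu0 he0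
  have huv : u*v ≤ 13/240 := by nlinarith
  have hu2 : u^2 ≤ 1/400 := by nlinarith
  have hq28 : q ≤ 28/100 := by linarith
  have hk' : k ≤ 25/18 := by nlinarith [mul_le_mul_of_nonneg_right hq28 hk0]
  have hw' : w ≤ (25/18)*q := by nlinarith [mul_le_mul_of_nonneg_left hk' hq0]
  have h1 : u*v*w ≤ (25/18)*(u*v*q) := by
    calc u*v*w = (u*v)*w := by ring
    _ ≤ (u*v)*((25/18)*q) := mul_le_mul_of_nonneg_left hw' huv0
    _ = (25/18)*(u*v*q) := by ring
  have h2 : u*v*q ≤ u*v*e + 2*(u*v)^2 + u^2*(u*v) := by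
    calc u*v*q = (u*v)*q := by ring
    _ ≤ (u*v)*(e + 2*(u*v) + u^2) := mul_le_mul_of_nonneg_left hq huv0
    _ = u*v*e + 2*(u*v)^2 + u^2*(u*v) := by ring
  have h3 : u*v*e ≤ (13/12)*(u*e) := by
    calc u*v*e = (u*e)*v := by ring
    _ ≤ (u*e)*(13/12) := mul_le_mul_of_nonneg_left hv hue0
    _ = (13/12)*(u*e) := by ring
  have hv2 : v^2 ≤ 169/144 := by nlinarith
  have h4 : (u*v)^2 ≤ (169/144)*u^2 := by
    calc (u*v)^2 = u^2*v^2 := by ring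
    _ ≤ u^2*(169/144) := mul_le_mul_of_nonneg_left hv2 (sq_nonneg u)
    _ = (169/144)*u^2 := by ring
  have h5 : u^2*(u*v) ≤ (13/240)*u^2 := by
    calc u^2*(u*v) ≤ u^2*(13/240) := mul_le_mul_of_nonneg_left huv (sq_nonneg u)
    _ = (13/240)*u^2 := by ring
  have h6 : u^2*k ≤ (25/18)*u^2 := by
    calc u^2*k ≤ u^2*(25/18) := mul_le_mul_of_nonneg_left hk' (sq_nonneg u)
    _ = (25/18)*u^2 := by ring
  have h7 : 0 ≤ u^2 := sq_nonneg u
  linarith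

set_option maxHeartbeats 2000000 in
/-- Pseudoinverse expansion.  Let `𝒳*, D : ℝⁿ → V` be linear maps into a finite-dimensional
inner product space `V = ℝ^m`, let `Λ > 0`, and suppose
`Δ/Λ := ‖(1/(nΛ)) 𝒳* 𝒳*' − I‖₂ ≤ 1/6` and `‖D‖₂ ≤ √(nΛ)/20`.  Then
`𝒳* ∘ (𝒳* + D)⁺ = I − (1/(nΛ)) D 𝒳*' + F` with
`‖F‖₂ ≤ 16 ω² + 2 ω (Δ/Λ)` where `ω = ‖D‖₂/√(nΛ)`; here the Moore–Penrose pseudoinverse of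
the surjective map `𝒳* + D` is `(𝒳*+D)' ∘ ((𝒳*+D)(𝒳*+D)')⁻¹`, the inverse being witnessed
by `J`. -/
theorem pseudoinverse_expansion (n m : ℕ) (Λ : ℝ) (hΛ : 0 < Λ) (hn : 0 < n)
    (X D : EuclideanSpace ℝ (Fin n) →L[ℝ] EuclideanSpace ℝ (Fin m))
    (hiso : ‖(1 / ((n : ℝ) * Λ)) • (X ∘L ContinuousLinearMap.adjoint X) -
        ContinuousLinearMap.id ℝ (EuclideanSpace ℝ (Fin m))‖ ≤ 1 / 6)
    (hD : ‖D‖ ≤ Real.sqrt ((n : ℝ) * Λ) / 20)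
    (J : EuclideanSpace ℝ (Fin m) →L[ℝ] EuclideanSpace ℝ (Fin m))
    (hJ1 : ((X + D) ∘L ContinuousLinearMap.adjoint (X + D)) ∘L J =
      ContinuousLinearMap.id ℝ (EuclideanSpace ℝ (Fin m)))
    (hJ2 : J ∘L ((X + D) ∘L ContinuousLinearMap.adjoint (X + D)) =
      ContinuousLinearMap.id ℝ (EuclideanSpace ℝ (Fin m))) :
    ∃ F : EuclideanSpace ℝ (Fin m) →L[ℝ] EuclideanSpace ℝ (Fin m),
      X ∘L (ContinuousLinearMap.adjoint (X + D) ∘L J) =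
        ContinuousLinearMap.id ℝ (EuclideanSpace ℝ (Fin m)) -
          (1 / ((n : ℝ) * Λ)) • (D ∘L ContinuousLinearMap.adjoint X) + F ∧
      ‖F‖ ≤ 16 * (‖D‖ / Real.sqrt ((n : ℝ) * Λ)) ^ 2 +
        2 * (‖D‖ / Real.sqrt ((n : ℝ) * Λ)) *
          ‖(1 / ((n : ℝ) * Λ)) • (X ∘L ContinuousLinearMap.adjoint X) -
            ContinuousLinearMap.id ℝ (EuclideanSpace ℝ (Fin m))‖ := by
  have hs : (0:ℝ) < (n : ℝ) * Λ := mul_pos (by exact_mod_cast hn) hΛ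
  set s : ℝ := (n : ℝ) * Λ with hs_def
  set r : ℝ := Real.sqrt s with hr_def
  have hr : 0 < r := Real.sqrt_pos.mpr hs
  have hr2 : r ^ 2 = s := Real.sq_sqrt hs.le
  set c : ℝ := 1 / s with hc_def
  have hc : 0 < c := by positivity
  have hcs : c * s = 1 := by rw [hc_def, one_div, inv_mul_cancel₀ hs.ne']
  set I : EuclideanSpace ℝ (Fin m) →L[ℝ] EuclideanSpace ℝ (Fin m) :=
    ContinuousLinearMap.id ℝ (EuclideanSpace ℝ (Fin m)) with hI_def
  set X' := ContinuousLinearMap.adjoint X with hX'_def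
  set D' := ContinuousLinearMap.adjoint D with hD'_def
  have hnsmul : ∀ (T : EuclideanSpace ℝ (Fin m) →L[ℝ] EuclideanSpace ℝ (Fin m)),
      ‖c • T‖ = c * ‖T‖ := by
    intro T
    have h := norm_smul c T
    rwa [Real.norm_eq_abs, abs_of_pos hc] at h
  have hadjX : ‖X'‖ = ‖X‖ := LinearIsometryEquiv.norm_map adjoint X
  have hadjD : ‖D'‖ = ‖D‖ := LinearIsometryEquiv.norm_map adjoint D
  have hadd : ContinuousLinearMap.adjoint (X + D) = X' + D' := map_add _ _ _
  set A' := X ∘L X' with hA'_def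
  set B' := X ∘L D' with hB'_def
  set Cm := D ∘L X' with hCm_def
  set Dm := D ∘L D' with hDm_def
  set M := (X + D) ∘L ContinuousLinearMap.adjoint (X + D) with hM_def
  have hM : M = A' + B' + Cm + Dm := by
    rw [hM_def, hadd, add_comp, comp_add, comp_add]; abel
  -- key expansion of the main composition
  have hcomp : X ∘L (ContinuousLinearMap.adjoint (X + D) ∘L J) =
      I - Cm ∘L J - Dm ∘L J := by
    have h1 : X ∘L (ContinuousLinearMap.adjoint (X + D) ∘L J) = (A' + B') ∘L J := by
      rw [hadd, ← comp_assoc, comp_add]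
    have h2 : (A' + B') ∘L J + (Cm ∘L J + Dm ∘L J) = I := by
      rw [← hJ1, hM]; simp only [add_comp]; abel
    rw [h1, eq_sub_iff_add_eq, eq_sub_iff_add_eq, ← h2]; abel
  refine ⟨X ∘L (ContinuousLinearMap.adjoint (X + D) ∘L J) - I + c • Cm, by abel, ?_⟩
  -- representation of F
  have hF : X ∘L (ContinuousLinearMap.adjoint (X + D) ∘L J) - I + c • Cm =
      Cm ∘L (c • I - J) - Dm ∘L J := by
    rw [hcomp, comp_sub, comp_smul, comp_id]; abel
  rw [hF]
  -- Neumann-type bounds on K := s • J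
  set K := s • J with hK_def
  have hGK : (c • M) ∘L K = I := by
    rw [hK_def, smul_comp, comp_smul, smul_smul, hcs, one_smul, hM_def, hJ1]
  have hKrec : (I - c • M) ∘L K = K - I := by
    rw [sub_comp, id_comp, hGK]
  set q : ℝ := ‖I - c • M‖ with hq_def
  have hknorm : ‖K‖ ≤ 1 + q * ‖K‖ := by
    have : K = I + (I - c • M) ∘L K := by rw [hKrec]; abel
    calc ‖K‖ = ‖I + (I - c • M) ∘L K‖ := by rw [← this]
    _ ≤ ‖I‖ + ‖(I - c • M) ∘L K‖ := norm_add_le _ _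
    _ ≤ 1 + q * ‖K‖ := by
        gcongr
        · exact norm_id_le
        · exact opNorm_comp_le _ _
  have hwnorm : ‖I - K‖ ≤ q * ‖K‖ := by
    have : I - K = -((I - c • M) ∘L K) := by rw [hKrec]; abel
    rw [this, norm_neg]
    exact opNorm_comp_le _ _
  -- norm of the operator A' and X
  have hA'norm : ‖A'‖ = ‖X‖ * ‖X‖ := by
    have := norm_adjoint_comp_self X'
    rwa [hX'_def, adjoint_adjoint, ← hX'_def, ← hA'_def, hadjX] at this
  have hx2 : ‖X‖ ^ 2 ≤ (7/6) * s := by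
    have h1 : ‖c • A'‖ ≤ 7/6 := by
      calc ‖c • A'‖ = ‖(c • A' - I) + I‖ := by rw [sub_add_cancel]
      _ ≤ ‖c • A' - I‖ + ‖I‖ := norm_add_le _ _
      _ ≤ 1/6 + 1 := add_le_add hiso norm_id_le
      _ = 7/6 := by norm_num
    have h2 : ‖c • A'‖ = c * (‖X‖ * ‖X‖) := by rw [hnsmul, hA'norm]
    rw [h2] at h1
    calc ‖X‖ ^ 2 = (c * (‖X‖ * ‖X‖)) * s := by
          rw [hc_def]; field_simp
    _ ≤ (7/6) * s := by gcongr
  -- bound on q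
  have hqbound : q ≤ ‖c • A' - I‖ + c * (2 * (‖D‖ * ‖X‖) + ‖D‖ ^ 2) := by
    have hexp : I - c • M = -(c • A' - I) - (c • B' + c • Cm + c • Dm) := by
      rw [hM, smul_add, smul_add, smul_add]; abel
    calc q = ‖-(c • A' - I) - (c • B' + c • Cm + c • Dm)‖ := by rw [hq_def, hexp]
    _ ≤ ‖-(c • A' - I)‖ + ‖c • B' + c • Cm + c • Dm‖ := norm_sub_le _ _
    _ ≤ ‖c • A' - I‖ + (‖c • B'‖ + ‖c • Cm‖ + ‖c • Dm‖) := by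
        rw [norm_neg]
        gcongr
        exact (norm_add_le _ _).trans (by gcongr; exact norm_add_le _ _)
    _ ≤ ‖c • A' - I‖ + c * (2 * (‖D‖ * ‖X‖) + ‖D‖ ^ 2) := by
        have hB : ‖c • B'‖ ≤ c * (‖X‖ * ‖D‖) := by
          rw [hnsmul]
          gcongr
          exact (opNorm_comp_le _ _).trans (by rw [hadjD])
        have hC : ‖c • Cm‖ ≤ c * (‖D‖ * ‖X‖) := by
          rw [hnsmul]
          gcongr
          exact (opNorm_comp_le _ _).trans (by rw [hadjX])
        have hDd : ‖c • Dm‖ ≤ c * (‖D‖ * ‖D‖) := by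
          rw [hnsmul]
          gcongr
          exact (opNorm_comp_le _ _).trans (by rw [hadjD])
        have : ‖D‖ ^ 2 = ‖D‖ * ‖D‖ := sq ‖D‖
        linarith
  -- norm bound on F
  have hFbound : ‖Cm ∘L (c • I - J) - Dm ∘L J‖ ≤
      (‖D‖ * ‖X‖) * (c * ‖I - K‖) + (‖D‖ * ‖D‖) * (c * ‖K‖) := by
    have hJK : J = c • K := by rw [hK_def, smul_smul, mul_comm c s]
                               rw [mul_comm s c, hcs, one_smul]
    have e1 : c • I - J = c • (I - K) := by rw [hJK, smul_sub]
    have e2 : ‖Cm ∘L (c • I - J)‖ ≤ (‖D‖ * ‖X‖) * (c * ‖I - K‖) := by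
      rw [e1, comp_smul, hnsmul]
      calc c * ‖Cm ∘L (I - K)‖ ≤ c * (‖Cm‖ * ‖I - K‖) := by
            gcongr; exact opNorm_comp_le _ _
      _ ≤ c * ((‖D‖ * ‖X‖) * ‖I - K‖) := by
            gcongr
            exact (opNorm_comp_le _ _).trans (by rw [hadjX])
      _ = (‖D‖ * ‖X‖) * (c * ‖I - K‖) := by ring
    have e3 : ‖Dm ∘L J‖ ≤ (‖D‖ * ‖D‖) * (c * ‖K‖) := by
      rw [hJK, comp_smul, hnsmul]
      calc c * ‖Dm ∘L K‖ ≤ c * (‖Dm‖ * ‖K‖) := by gcongr; exact opNorm_comp_le _ _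
      _ ≤ c * ((‖D‖ * ‖D‖) * ‖K‖) := by
            gcongr
            exact (opNorm_comp_le _ _).trans (by rw [hadjD])
      _ = (‖D‖ * ‖D‖) * (c * ‖K‖) := by ring
    calc ‖Cm ∘L (c • I - J) - Dm ∘L J‖ ≤ ‖Cm ∘L (c • I - J)‖ + ‖Dm ∘L J‖ :=
          norm_sub_le _ _
    _ ≤ _ := add_le_add e2 e3
  -- final arithmetic
  set u : ℝ := ‖D‖ / r with hu_def
  set v : ℝ := ‖X‖ / r with hv_def
  have hu0 : 0 ≤ u := by positivity
  have hv0 : 0 ≤ v := by positivity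
  have hu : u ≤ 1/20 := by
    rw [hu_def, div_le_iff₀ hr]
    calc ‖D‖ ≤ r / 20 := hD
    _ = 1/20 * r := by ring
  have hv : v ≤ 13/12 := by
    have hvsq : v ^ 2 ≤ 7/6 := by
      rw [hv_def, div_pow, hr2, div_le_iff₀ hs]
      linarith [hx2]
    nlinarith
  have hcdx : c * (‖D‖ * ‖X‖) = u * v := by
    rw [hu_def, hv_def, hc_def, ← hr2]; ring
  have hcd2 : c * (‖D‖ * ‖D‖) = u ^ 2 := by
    rw [hu_def, hc_def, ← hr2]; ring
  set e : ℝ := ‖c • A' - I‖ with he_def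
  have he : e ≤ 1/6 := hiso
  have hq' : q ≤ e + 2*(u*v) + u^2 := by
    calc q ≤ e + c * (2 * (‖D‖ * ‖X‖) + ‖D‖ ^ 2) := hqbound
    _ = e + 2 * (c * (‖D‖ * ‖X‖)) + c * (‖D‖ * ‖D‖) := by rw [sq]; ring
    _ = e + 2*(u*v) + u^2 := by rw [hcdx, hcd2]
  have harith := pe_arith u v e q ‖K‖ ‖I - K‖ hu0 hv0 (norm_nonneg _)
    (norm_nonneg _) (norm_nonneg _) (norm_nonneg _) hu hv he hq' hknorm hwnorm
  calc ‖Cm ∘L (c • I - J) - Dm ∘L J‖ ≤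
      (‖D‖ * ‖X‖) * (c * ‖I - K‖) + (‖D‖ * ‖D‖) * (c * ‖K‖) := hFbound
  _ = u * v * ‖I - K‖ + u ^ 2 * ‖K‖ := by rw [← hcdx, ← hcd2]; ring
  _ ≤ 16 * u ^ 2 + 2 * u * e := harith
end
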